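/- arXiv:2309.13741 — 11 statements merged into one kernel-verified Lean document; each statement's English description precedes it below -/
import Mathlib

section
/- Let G be a finite undirected graph (possibly with loops) having a loop at some vertex w (i.e., w is adjacent to w), and let 1 ≤ k₁ ≤ k₂. If multisets i and j of size k₁ are adjacent in G^{⊙k₁}, then the multisets i + (k₂−k₁)·{w} and j + (k₂−k₁)·{w}, obtained by adding k₂−k₁ copies of w to each, are adjacent in G^{⊙k₂}. Hence, as unweighted graphs, G^{⊙k₁} is a subgraph of G^{⊙k₂}. -/
/-- Adjacency in the (unweighted) `k`-th symmetric tensor power of a graph given by an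
adjacency relation `adj` on `V`: multisets `i` and `j` of size `k` are adjacent iff there are
`k`-tuples `p, q` with underlying multisets `i` and `j` such that `p ℓ` is adjacent to `q ℓ`
for every `ℓ`. -/
def symPowAdj {V : Type*} (adj : V → V → Prop) (k : ℕ) (i j : Sym V k) : Prop :=
  ∃ p q : Fin k → V,
    (↑(List.ofFn p) : Multiset V) = ↑i ∧ (↑(List.ofFn q) : Multiset V) = ↑j ∧
    ∀ ℓ : Fin k, adj (p ℓ) (q ℓ)

/-- if `G` has a loop at `w` and `1 ≤ k₁ ≤ k₂` (here `k₂ = k₁ + d`), then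
adjacency of `i` and `j` in `G^{⊙k₁}` implies adjacency of `i + (k₂−k₁)·{w}` and
`j + (k₂−k₁)·{w}` in `G^{⊙k₂}`; together with injectivity of this padding map, `G^{⊙k₁}`
is a subgraph of `G^{⊙k₂}` as unweighted graphs. -/
theorem symPow_subgraph_of_loop {V : Type*} [Fintype V] (adj : V → V → Prop)
    (hsym : Symmetric adj) (w : V) (hw : adj w w) (k₁ d : ℕ) (hk : 1 ≤ k₁) :
    (∀ i j : Sym V k₁, symPowAdj adj k₁ i j →
      symPowAdj adj (k₁ + d) (i.append (Sym.replicate d w))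
        (j.append (Sym.replicate d w))) ∧
    Function.Injective (fun i : Sym V k₁ => i.append (Sym.replicate d w)) := by
  constructor
  · rintro i j ⟨p, q, hp, hq, hadj⟩
    refine ⟨Fin.append p (fun _ => w), Fin.append q (fun _ => w), ?_, ?_, ?_⟩
    · simp [List.ofFn_fin_append, Sym.coe_append, Sym.coe_replicate, List.ofFn_const, Multiset.coe_replicate, ← Multiset.coe_add, hp]
    · simp [List.ofFn_fin_append, Sym.coe_append, Sym.coe_replicate, List.ofFn_const, Multiset.coe_replicate, ← Multiset.coe_add, hq]
    · intro ℓ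
      refine Fin.addCases (fun l => ?_) (fun l => ?_) ℓ
      · simpa using hadj l
      · simpa using hw
  · intro a b h
    exact (Sym.append_inj_left _).mp h
end

section
/- Let G be a finite undirected graph (possibly with loops) containing two adjacent vertices u and w, let k ≥ 1 and ℓ ≥ 0. If multisets i and j of size k are adjacent in G^{⊙k}, then the multisets i + ℓ·{u} + ℓ·{w} and j + ℓ·{u} + ℓ·{w}, each obtained by adding ℓ copies of u and ℓ copies of w, are adjacent in G^{⊙(k+2ℓ)}. Hence, as unweighted graphs, G^{⊙k} is a subgraph of G^{⊙(k+2ℓ)}. -/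
/-- if `G` contains adjacent vertices `u` and `w`, `k ≥ 1` and `l ≥ 0`, then
adjacency of `i` and `j` in `G^{⊙k}` implies adjacency of `i + l·{u} + l·{w}` and
`j + l·{u} + l·{w}` in `G^{⊙(k+2l)}`; together with injectivity of this padding map,
`G^{⊙k}` is a subgraph of `G^{⊙(k+2l)}` as unweighted graphs. -/
theorem symPow_subgraph_of_edge {V : Type*} [Fintype V] (adj : V → V → Prop)
    (hsym : Symmetric adj) (u w : V) (huw : adj u w) (k l : ℕ) (hk : 1 ≤ k) :
    (∀ i j : Sym V k, symPowAdj adj k i j →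
      symPowAdj adj (k + l + l)
        ((i.append (Sym.replicate l u)).append (Sym.replicate l w))
        ((j.append (Sym.replicate l u)).append (Sym.replicate l w))) ∧
    Function.Injective
      (fun i : Sym V k => (i.append (Sym.replicate l u)).append (Sym.replicate l w)) := by
  constructor
  · rintro i j ⟨p, q, hp, hq, hpq⟩
    refine ⟨Fin.append (Fin.append p (fun _ => u)) (fun _ => w),
      Fin.append (Fin.append q (fun _ => w)) (fun _ => u), ?_, ?_, ?_⟩
    · simp only [List.ofFn_fin_append, List.ofFn_const, Sym.coe_append, Sym.coe_replicate]
      simp only [← Multiset.coe_add, Multiset.coe_replicate, hp]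
    · simp only [List.ofFn_fin_append, List.ofFn_const, Sym.coe_append, Sym.coe_replicate]
      simp only [← Multiset.coe_add, Multiset.coe_replicate, hq]
      exact add_right_comm _ _ _
    · intro m
      rcases m with ⟨m, hm⟩
      rcases lt_or_ge m (k + l) with h | h
      · rw [show (⟨m, hm⟩ : Fin (k + l + l)) = Fin.castAdd l ⟨m, h⟩ from rfl,
          Fin.append_left, Fin.append_left]
        
        rcases lt_or_ge m k with h2 | h2
        · rw [show (⟨m, h⟩ : Fin (k + l)) = Fin.castAdd l ⟨m, h2⟩ from rfl,
            Fin.append_left, Fin.append_left]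
          exact hpq _
        · rw [show (⟨m, h⟩ : Fin (k + l)) = Fin.natAdd k ⟨m - k, by omega⟩ from by
            simp [Fin.ext_iff]; omega, Fin.append_right, Fin.append_right]
          exact huw
      · rw [show (⟨m, hm⟩ : Fin (k + l + l)) = Fin.natAdd (k + l) ⟨m - (k + l), by omega⟩
          from by simp [Fin.ext_iff]; omega, Fin.append_right, Fin.append_right]
        exact hsym huw
  · intro i j h
    simp only at h
    rw [Sym.append_inj_left, Sym.append_inj_left] at h
    exact h
end

section
/- Let A be a symmetric real n×n matrix whose characteristic polynomial equals ∏_{s=1}^{n}(X − λ_s) for real numbers λ_1,…,λ_n, and let k ≥ 1. Then the characteristic polynomial of A^{⊙k} equals ∏_i (X − ∏_{s∈i} λ_s), where the product runs over all binom(n+k−1,k) multisets i of size k over {1,…,n} and ∏_{s∈i} λ_s denotes the product of λ_s over the elements of i counted with multiplicity. In particular, the eigenvalues of A^{⊙k} are exactly the products λ_{i₁}λ_{i₂}⋯λ_{i_k} with 1 ≤ i₁ ≤ i₂ ≤ ⋯ ≤ i_k ≤ n. -/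
/-- The set of `k`-tuples over `Fin n` whose underlying multiset is `i`.
Its cardinality is `C(i) = k!/(m_1(i)! ⋯ m_n(i)!)`. -/
def tuplesOf {n k : ℕ} (i : Sym (Fin n) k) : Finset (Fin k → Fin n) :=
  Finset.univ.filter fun p => (↑(List.ofFn p) : Multiset (Fin n)) = ↑i

/-- The `k`-th symmetric tensor power of an `n × n` real matrix, with rows and columns
indexed by the multisets of size `k` over `{1,…,n}`:
`[A^{⊙k}]_{i,j} = (1/√(C(i)·C(j))) · Σ_{p,q} ∏_ℓ A_{p_ℓ,q_ℓ}`. -/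
noncomputable def symPow {n : ℕ} (k : ℕ) (A : Matrix (Fin n) (Fin n) ℝ) :
    Matrix (Sym (Fin n) k) (Sym (Fin n) k) ℝ := fun i j =>
  (Real.sqrt (((tuplesOf i).card : ℝ) * ((tuplesOf j).card : ℝ)))⁻¹ *
    ∑ p ∈ tuplesOf i, ∑ q ∈ tuplesOf j, ∏ ℓ : Fin k, A (p ℓ) (q ℓ)


/-! `A^{⊙k}` is the compression of the tensor power `A^{⊗k} = (∏_ℓ A_{p_ℓ q_ℓ})_{p,q}` to the
symmetric tensors. Since `A^{⊗k}` commutes with permuting the `k` factors, the row sums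
`∑_{q ∈ T_j} A^{⊗k}_{p q}` over a fibre `T_j` of tuples with multiset `j` depend only on the
multiset of `p`; this makes `A ↦ A^{⊙k}` multiplicative, and it sends a diagonal matrix to the
diagonal matrix of products `∏_{s∈i} d_s`. Orthogonally diagonalising `A = U D Uᵀ` therefore
conjugates `A^{⊙k}` to the diagonal matrix of products of eigenvalues of `A`, and these are the
`λ_s` up to a permutation. -/

open Finset

theorem exists_perm_eq_comp_of_map_univ_eq {ι α : Type*} [Fintype ι] [DecidableEq α]
    {f g : ι → α} (h : univ.val.map f = univ.val.map g) : ∃ σ : Equiv.Perm ι, f = g ∘ σ := by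
  have hfiber (a : α) : Fintype.card {x // f x = a} = Fintype.card {x // g x = a} := by
    simpa [Fintype.card_subtype, Multiset.count_map, eq_comm, Finset.card, Finset.filter_val]
      using congrArg (Multiset.count a) h
  exact ⟨Equiv.ofFiberEquiv fun a => Fintype.equivOfCardEq (hfiber a),
    funext fun x => (Equiv.ofFiberEquiv_map _ x).symm⟩

theorem Matrix.charpoly_mul_mul_of_mul_eq_one {ι R : Type*} [Fintype ι] [DecidableEq ι]
    [CommRing R] {P Q : Matrix ι ι R} (M : Matrix ι ι R) (h : Q * P = 1) :
    (P * M * Q).charpoly = M.charpoly := by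
  rw [charpoly_mul_comm, ← mul_assoc, h, one_mul]

namespace Sym

variable {α : Type*} {k : ℕ}

def ofFn (p : Fin k → α) : Sym α k := ⟨↑(List.ofFn p), by simp⟩

@[simp] theorem coe_ofFn (p : Fin k → α) : (ofFn p : Multiset α) = univ.val.map p := by
  simp [ofFn, Fin.univ_val_map]

theorem ofFn_comp_perm (p : Fin k → α) (σ : Equiv.Perm (Fin k)) : ofFn (p ∘ σ) = ofFn p :=
  Sym.coe_injective (Multiset.coe_eq_coe.mpr (σ.ofFn_comp_perm p))

theorem exists_perm_of_ofFn_eq_ofFn [DecidableEq α] {p q : Fin k → α} (h : ofFn p = ofFn q) :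
    ∃ σ : Equiv.Perm (Fin k), p = q ∘ σ :=
  exists_perm_eq_comp_of_map_univ_eq (by simpa using congrArg Subtype.val h)

theorem ofFn_surjective : Function.Surjective (ofFn : (Fin k → α) → Sym α k) := by
  intro i
  obtain ⟨l, hl⟩ := Quotient.exists_rep (i : Multiset α)
  have hlen : l.length = k := by simpa [← hl] using i.2
  subst hlen
  exact ⟨fun ℓ => l[ℓ], Sym.coe_injective (by simp [ofFn, ← hl])⟩

theorem prod_map_ofFn {M : Type*} [CommMonoid M] (d : α → M) (p : Fin k → α) :
    ((ofFn p : Multiset α).map d).prod = ∏ ℓ, d (p ℓ) := by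
  rw [coe_ofFn, Multiset.map_map]
  rfl

theorem prod_prod_map_comp_perm {ι M N : Type*} [Fintype ι] [DecidableEq ι] [CommMonoid M]
    [CommMonoid N] (F : M → N) (g : ι → M) (σ : Equiv.Perm ι) :
    ∏ i : Sym ι k, F ((i : Multiset ι).map (g ∘ σ)).prod =
      ∏ i : Sym ι k, F ((i : Multiset ι).map g).prod :=
  Fintype.prod_equiv (equivCongr σ) _ _ fun i => by simp [equivCongr, Multiset.map_map]

end Sym

def tensorPow (k : ℕ) {ι R : Type*} [CommSemiring R] (A : Matrix ι ι R) :
    Matrix (Fin k → ι) (Fin k → ι) R :=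
  fun p q => ∏ ℓ, A (p ℓ) (q ℓ)

section tensorPow

variable {k : ℕ} {ι R : Type*} [CommSemiring R]

theorem tensorPow_mul [Fintype ι] [DecidableEq ι] (A B : Matrix ι ι R) :
    tensorPow k (A * B) = tensorPow k A * tensorPow k B := by
  ext p q
  simp only [tensorPow, Matrix.mul_apply, Finset.prod_univ_sum, Fintype.piFinset_univ,
    Finset.prod_mul_distrib]

theorem tensorPow_comp_perm (A : Matrix ι ι R) (p q : Fin k → ι) (σ : Equiv.Perm (Fin k)) :
    tensorPow k A (p ∘ σ) (q ∘ σ) = tensorPow k A p q :=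
  Equiv.prod_comp σ fun ℓ => A (p ℓ) (q ℓ)

theorem tensorPow_diagonal [DecidableEq ι] (d : ι → R) :
    tensorPow k (Matrix.diagonal d) = Matrix.diagonal fun p => ∏ ℓ, d (p ℓ) := by
  ext p q
  by_cases hpq : p = q
  · simp [tensorPow, hpq]
  · obtain ⟨ℓ, hℓ⟩ := Function.ne_iff.mp hpq
    simp [tensorPow, hpq, Finset.prod_eq_zero (Finset.mem_univ ℓ), hℓ]

end tensorPow

variable {n k : ℕ}

theorem mem_tuplesOf {i : Sym (Fin n) k} {p : Fin k → Fin n} :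
    p ∈ tuplesOf i ↔ Sym.ofFn p = i := by
  rw [← Sym.coe_inj]
  simp [tuplesOf, Sym.ofFn]

theorem tuplesOf_nonempty (i : Sym (Fin n) k) : (tuplesOf i).Nonempty :=
  let ⟨p, hp⟩ := Sym.ofFn_surjective i
  ⟨p, mem_tuplesOf.mpr hp⟩

theorem card_tuplesOf_pos (i : Sym (Fin n) k) : (0 : ℝ) < #(tuplesOf i) := by
  exact_mod_cast (tuplesOf_nonempty i).card_pos

theorem comp_perm_mem_tuplesOf {i : Sym (Fin n) k} {p : Fin k → Fin n}
    (hp : p ∈ tuplesOf i) (σ : Equiv.Perm (Fin k)) : p ∘ σ ∈ tuplesOf i := by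
  rw [mem_tuplesOf, Sym.ofFn_comp_perm, ← mem_tuplesOf]
  exact hp

theorem sum_sum_tuplesOf {M : Type*} [AddCommMonoid M] (f : (Fin k → Fin n) → M) :
    ∑ i : Sym (Fin n) k, ∑ p ∈ tuplesOf i, f p = ∑ p, f p := by
  have hfiber (i : Sym (Fin n) k) : tuplesOf i = univ.filter (Sym.ofFn · = i) := by
    ext p
    simp [mem_tuplesOf]
  simp_rw [hfiber]
  exact Finset.sum_fiberwise univ Sym.ofFn f

section tuplesOf

variable {R : Type*} [CommSemiring R]

theorem sum_tuplesOf_tensorPow_comp_perm (A : Matrix (Fin n) (Fin n) R) (j : Sym (Fin n) k)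
    (p : Fin k → Fin n) (σ : Equiv.Perm (Fin k)) :
    ∑ q ∈ tuplesOf j, tensorPow k A (p ∘ σ) q = ∑ q ∈ tuplesOf j, tensorPow k A p q := by
  refine Finset.sum_nbij' (· ∘ σ.symm) (· ∘ σ) (fun q hq => comp_perm_mem_tuplesOf hq σ.symm)
    (fun q hq => comp_perm_mem_tuplesOf hq σ) (fun q _ => by ext; simp)
    (fun q _ => by ext; simp) (fun q _ => ?_)
  rw [← tensorPow_comp_perm A p (q ∘ σ.symm) σ]
  simp [Function.comp_assoc]

theorem sum_tuplesOf_tensorPow_congr {A : Matrix (Fin n) (Fin n) R} {i : Sym (Fin n) k}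
    (j : Sym (Fin n) k) {p p' : Fin k → Fin n} (hp : p ∈ tuplesOf i) (hp' : p' ∈ tuplesOf i) :
    ∑ q ∈ tuplesOf j, tensorPow k A p q = ∑ q ∈ tuplesOf j, tensorPow k A p' q := by
  obtain ⟨σ, rfl⟩ :=
    Sym.exists_perm_of_ofFn_eq_ofFn ((mem_tuplesOf.mp hp).trans (mem_tuplesOf.mp hp').symm)
  exact sum_tuplesOf_tensorPow_comp_perm A j p' σ

end tuplesOf

theorem symPow_apply (A : Matrix (Fin n) (Fin n) ℝ) (i j : Sym (Fin n) k) :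
    symPow k A i j = (√(#(tuplesOf i) * #(tuplesOf j) : ℝ))⁻¹ *
      ∑ p ∈ tuplesOf i, ∑ q ∈ tuplesOf j, tensorPow k A p q :=
  rfl

theorem symPow_apply_of_mem_tuplesOf (A : Matrix (Fin n) (Fin n) ℝ) {i : Sym (Fin n) k}
    (j : Sym (Fin n) k) {p : Fin k → Fin n} (hp : p ∈ tuplesOf i) :
    symPow k A i j =
      √(#(tuplesOf i) : ℝ) / √(#(tuplesOf j) : ℝ) * ∑ q ∈ tuplesOf j, tensorPow k A p q := by
  have hrows : ∑ p' ∈ tuplesOf i, ∑ q ∈ tuplesOf j, tensorPow k A p' q =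
      #(tuplesOf i) * ∑ q ∈ tuplesOf j, tensorPow k A p q := by
    rw [Finset.sum_congr rfl fun p' hp' => sum_tuplesOf_tensorPow_congr j hp' hp,
      Finset.sum_const, nsmul_eq_mul]
  have hi := card_tuplesOf_pos i
  rw [symPow_apply, hrows, Real.sqrt_mul hi.le]
  field_simp
  rw [Real.sq_sqrt hi.le]

theorem symPow_mul (A B : Matrix (Fin n) (Fin n) ℝ) :
    symPow k (A * B) = symPow k A * symPow k B := by
  ext i j
  obtain ⟨p, hp⟩ := tuplesOf_nonempty i
  set G : (Fin k → Fin n) → ℝ := fun r => ∑ q ∈ tuplesOf j, tensorPow k B r q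
  -- the factor `√C_m` cancels, and `G` is constant on the fibre `T_m`
  have hterm (m : Sym (Fin n) k) : symPow k A i m * symPow k B m j =
      √(#(tuplesOf i) : ℝ) / √(#(tuplesOf j) : ℝ) *
        ∑ r ∈ tuplesOf m, tensorPow k A p r * G r := by
    obtain ⟨r, hr⟩ := tuplesOf_nonempty m
    rw [symPow_apply_of_mem_tuplesOf A m hp, symPow_apply_of_mem_tuplesOf B j hr,
      Finset.sum_congr rfl fun r' hr' => congrArg _ (sum_tuplesOf_tensorPow_congr j hr' hr),
      ← Finset.sum_mul]
    have hm := (Real.sqrt_pos.mpr (card_tuplesOf_pos m)).ne'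
    field_simp
  rw [Matrix.mul_apply, Finset.sum_congr rfl fun m _ => hterm m, ← Finset.mul_sum,
    sum_sum_tuplesOf, symPow_apply_of_mem_tuplesOf (A * B) j hp, tensorPow_mul]
  congr 1
  simp only [G, Matrix.mul_apply, Finset.mul_sum]
  exact Finset.sum_comm

theorem symPow_diagonal (d : Fin n → ℝ) :
    symPow k (Matrix.diagonal d) =
      Matrix.diagonal fun i : Sym (Fin n) k => ((i : Multiset (Fin n)).map d).prod := by
  ext i j
  obtain ⟨p, hp⟩ := tuplesOf_nonempty i
  rw [symPow_apply_of_mem_tuplesOf _ j hp, tensorPow_diagonal]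
  simp only [Matrix.diagonal_apply, Finset.sum_ite_eq, mem_tuplesOf]
  obtain rfl := mem_tuplesOf.mp hp
  by_cases hij : Sym.ofFn p = j
  · have hne := (Real.sqrt_pos.mpr (card_tuplesOf_pos (Sym.ofFn p))).ne'
    rw [if_pos hij, if_pos hij, ← hij, div_self hne, one_mul, Sym.prod_map_ofFn]
  · simp [hij]

theorem symPow_one : symPow k (1 : Matrix (Fin n) (Fin n) ℝ) = 1 := by
  rw [← Matrix.diagonal_one, symPow_diagonal]
  simp

open Polynomial in
theorem charpoly_symPow_of_isHermitian {A : Matrix (Fin n) (Fin n) ℝ} (hA : A.IsHermitian) :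
    (symPow k A).charpoly =
      ∏ i : Sym (Fin n) k, (X - C (((i : Multiset (Fin n)).map hA.eigenvalues).prod)) := by
  set U : Matrix (Fin n) (Fin n) ℝ := ↑hA.eigenvectorUnitary
  have hspec : A = U * Matrix.diagonal hA.eigenvalues * star U := by
    simpa using hA.spectral_theorem
  have hU : symPow k (star U) * symPow k U = 1 := by
    rw [← symPow_mul, Unitary.coe_star_mul_self, symPow_one]
  calc (symPow k A).charpoly
      = (symPow k U * symPow k (Matrix.diagonal hA.eigenvalues) * symPow k (star U)).charpoly := by
        rw [← symPow_mul, ← symPow_mul, ← hspec]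
    _ = (symPow k (Matrix.diagonal hA.eigenvalues)).charpoly :=
        Matrix.charpoly_mul_mul_of_mul_eq_one _ hU
    _ = _ := by rw [symPow_diagonal, Matrix.charpoly_diagonal]

open Polynomial in
theorem symPow_charpoly_general {n : ℕ} (k : ℕ)
    (A : Matrix (Fin n) (Fin n) ℝ) (hA : ∀ a b, A a b = A b a) (lam : Fin n → ℝ)
    (hchar : A.charpoly = ∏ s : Fin n, (X - C (lam s))) :
    (symPow k A).charpoly =
      ∏ i : Sym (Fin n) k, (X - C (((i : Multiset (Fin n)).map lam).prod)) := by
  have hH : A.IsHermitian := Matrix.IsHermitian.ext fun a b => by simpa using hA b a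
  have hroots : univ.val.map lam = univ.val.map hH.eigenvalues := by
    simpa [hchar, Polynomial.roots_prod, X_sub_C_ne_zero, Finset.prod_ne_zero_iff]
      using hH.roots_charpoly_eq_eigenvalues
  obtain ⟨σ, rfl⟩ := exists_perm_eq_comp_of_map_univ_eq hroots
  rw [charpoly_symPow_of_isHermitian hH, Sym.prod_prod_map_comp_perm (fun x => X - C x)]

open Polynomial in
/-- if the characteristic polynomial of a symmetric real matrix `A` splits as
`∏ (X - λ_s)`, then the characteristic polynomial of `A^{⊙k}` is
`∏_i (X - ∏_{s∈i} λ_s)`, the product running over all multisets `i` of size `k`;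
equivalently the eigenvalues of `A^{⊙k}` are the products `λ_{i₁}⋯λ_{i_k}`,
`1 ≤ i₁ ≤ ⋯ ≤ i_k ≤ n`. -/
theorem symPow_charpoly {n : ℕ} (k : ℕ) (hk : 1 ≤ k)
    (A : Matrix (Fin n) (Fin n) ℝ) (hA : ∀ a b, A a b = A b a) (lam : Fin n → ℝ)
    (hchar : A.charpoly = ∏ s : Fin n, (X - C (lam s))) :
    (symPow k A).charpoly =
      ∏ i : Sym (Fin n) k, (X - C (((i : Multiset (Fin n)).map lam).prod)) :=
  symPow_charpoly_general k A hA lam hchar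
end

section
/- Let A be a symmetric real n×n matrix and k ≥ 1. Then det(A^{⊙k}) = (det A)^{binom(n+k−1, n)}. -/
namespace SymPowAux
variable {n k : ℕ}
set_option maxHeartbeats 1000000

theorem exists_perm_comp {α : Type*} : ∀ {k : ℕ} (q q' : Fin k → α),
    (List.ofFn q).Perm (List.ofFn q') → ∃ σ : Equiv.Perm (Fin k), q' = q ∘ σ := by
  intro k
  induction k with
  | zero => exact fun q q' _ => ⟨1, funext fun x => x.elim0⟩
  | succ k ih =>
    intro q q' h
    have h0 : q' 0 ∈ List.ofFn q := h.symm.subset (by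
      rw [List.mem_ofFn]; exact ⟨0, rfl⟩)
    rw [List.mem_ofFn] at h0
    obtain ⟨j, hj⟩ := h0
    set q₁ : Fin (k + 1) → α := q ∘ (Equiv.swap 0 j) with hq₁
    have h₁ : (List.ofFn q₁).Perm (List.ofFn q') := (Equiv.Perm.ofFn_comp_perm _ q).trans h
    rw [List.ofFn_succ, List.ofFn_succ (f := q')] at h₁
    have hz : q₁ 0 = q' 0 := by simp [hq₁, hj]
    rw [hz] at h₁
    have h₂ := (List.perm_cons _).1 h₁
    obtain ⟨τ, hτ⟩ := ih _ _ h₂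
    refine ⟨(Equiv.Perm.decomposeFin.symm (0, τ)).trans (Equiv.swap 0 j), funext fun x => ?_⟩
    refine Fin.cases ?_ (fun i => ?_) x
    · simpa [hq₁] using hz.symm
    · have := congrFun hτ i
      simpa [hq₁, Function.comp] using this

def toSym (p : Fin k → Fin n) : Sym (Fin n) k :=
  ⟨(↑(List.ofFn p) : Multiset (Fin n)), by simp⟩

theorem mem_tuplesOf {i : Sym (Fin n) k} {p : Fin k → Fin n} :
    p ∈ tuplesOf i ↔ toSym p = i := by
  simp only [tuplesOf, Finset.mem_filter, Finset.mem_univ, true_and]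
  exact ⟨fun h => Subtype.ext h, fun h => congrArg Subtype.val h⟩

theorem mem_tuplesOf_toSym (p : Fin k → Fin n) : p ∈ tuplesOf (toSym p) :=
  mem_tuplesOf.2 rfl

theorem tuplesOf_nonempty (i : Sym (Fin n) k) : (tuplesOf i).Nonempty := by
  have hl : (i : Multiset (Fin n)).toList.length = k := by
    simp [i.2]
  refine ⟨fun ℓ => (i : Multiset (Fin n)).toList.get (Fin.cast hl.symm ℓ), ?_⟩
  rw [mem_tuplesOf]
  apply Subtype.ext
  show (↑(List.ofFn (fun ℓ => (i : Multiset (Fin n)).toList.get (Fin.cast hl.symm ℓ))) : Multiset (Fin n)) = (i : Multiset (Fin n))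
  have : List.ofFn (fun ℓ => (i : Multiset (Fin n)).toList.get (Fin.cast hl.symm ℓ))
      = (i : Multiset (Fin n)).toList := by
    apply List.ext_get
    · simp [hl]
    · intro m h1 h2
      simp
  rw [this, Multiset.coe_toList]

theorem card_tuplesOf_pos (i : Sym (Fin n) k) : 0 < (tuplesOf i).card :=
  Finset.card_pos.2 (tuplesOf_nonempty i)

theorem card_tuplesOf_pos' (i : Sym (Fin n) k) : (0 : ℝ) < ((tuplesOf i).card : ℝ) := by
  exact_mod_cast card_tuplesOf_pos i

theorem toSym_comp_perm (p : Fin k → Fin n) (σ : Equiv.Perm (Fin k)) :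
    toSym (p ∘ σ) = toSym p := by
  apply Subtype.ext
  exact Quot.sound (Equiv.Perm.ofFn_comp_perm σ p)

variable (A B : Matrix (Fin n) (Fin n) ℝ)

theorem rowsum_const (j : Sym (Fin n) k) {q q' : Fin k → Fin n}
    (h : toSym q = toSym q') :
    ∑ r ∈ tuplesOf j, ∏ ℓ : Fin k, B (q ℓ) (r ℓ)
      = ∑ r ∈ tuplesOf j, ∏ ℓ : Fin k, B (q' ℓ) (r ℓ) := by
  have hperm : (List.ofFn q).Perm (List.ofFn q') :=
    Multiset.coe_eq_coe.1 (congrArg Subtype.val h)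
  obtain ⟨σ, hσ⟩ := exists_perm_comp q q' hperm
  subst hσ
  refine Finset.sum_nbij' (fun r => r ∘ ⇑σ) (fun r => r ∘ ⇑σ⁻¹) ?_ ?_ ?_ ?_ ?_
  · intro r hr
    rw [mem_tuplesOf] at hr ⊢
    rw [toSym_comp_perm]; exact hr
  · intro r hr
    rw [mem_tuplesOf] at hr ⊢
    rw [toSym_comp_perm]; exact hr
  · intro r _; funext x; simp
  · intro r _; funext x; simp
  · intro r _
    rw [← Equiv.prod_comp σ (fun ℓ => B (q ℓ) (r ℓ))]
    rfl

theorem colsum_const (i : Sym (Fin n) k) {q q' : Fin k → Fin n}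
    (h : toSym q = toSym q') :
    ∑ p ∈ tuplesOf i, ∏ ℓ : Fin k, A (p ℓ) (q ℓ)
      = ∑ p ∈ tuplesOf i, ∏ ℓ : Fin k, A (p ℓ) (q' ℓ) :=
  rowsum_const (B := fun a b => A b a) i h

theorem sum_mul_sum_of_const {β : Type*} {s : Finset β} {g h : β → ℝ}
    (hg : ∀ a ∈ s, ∀ b ∈ s, g a = g b) (hh : ∀ a ∈ s, ∀ b ∈ s, h a = h b) :
    (∑ x ∈ s, g x) * (∑ x ∈ s, h x) = s.card * ∑ x ∈ s, g x * h x := by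
  rcases s.eq_empty_or_nonempty with rfl | ⟨a, ha⟩
  · simp
  · have h1 : ∑ x ∈ s, g x = s.card * g a := by
      rw [Finset.sum_congr rfl fun b hb => hg b hb a ha]; simp [mul_comm]
    have h2 : ∑ x ∈ s, h x = s.card * h a := by
      rw [Finset.sum_congr rfl fun b hb => hh b hb a ha]; simp [mul_comm]
    have h3 : ∑ x ∈ s, g x * h x = s.card * (g a * h a) := by
      rw [Finset.sum_congr rfl fun b hb => by rw [hg b hb a ha, hh b hb a ha]]
      simp [mul_comm]
    rw [h1, h2, h3]; ring

theorem sum_tuplesOf_fiberwise (f : (Fin k → Fin n) → ℝ) :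
    ∑ m : Sym (Fin n) k, ∑ q ∈ tuplesOf m, f q = ∑ q : Fin k → Fin n, f q := by
  have h : ∀ m : Sym (Fin n) k, tuplesOf m = Finset.univ.filter fun q => toSym q = m := by
    intro m
    ext q
    simp only [Finset.mem_filter, Finset.mem_univ, true_and, mem_tuplesOf]
  simp_rw [h]
  exact Finset.sum_fiberwise _ _ _

theorem symPow_mul : symPow k (A * B) = symPow k A * symPow k B := by
  ext i j
  rw [Matrix.mul_apply]
  have key : ∀ m : Sym (Fin n) k,
      symPow k A i m * symPow k B m j
        = (Real.sqrt (((tuplesOf i).card : ℝ) * ((tuplesOf j).card : ℝ)))⁻¹ *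
          ∑ q ∈ tuplesOf m,
            (∑ p ∈ tuplesOf i, ∏ ℓ : Fin k, A (p ℓ) (q ℓ)) *
            (∑ r ∈ tuplesOf j, ∏ ℓ : Fin k, B (q ℓ) (r ℓ)) := by
    intro m
    have hgh := sum_mul_sum_of_const (s := tuplesOf m)
      (g := fun q => ∑ p ∈ tuplesOf i, ∏ ℓ : Fin k, A (p ℓ) (q ℓ))
      (h := fun q => ∑ r ∈ tuplesOf j, ∏ ℓ : Fin k, B (q ℓ) (r ℓ))
      (fun a ha b hb => colsum_const A i ((mem_tuplesOf.1 ha).trans (mem_tuplesOf.1 hb).symm))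
      (fun a ha b hb => rowsum_const B j ((mem_tuplesOf.1 ha).trans (mem_tuplesOf.1 hb).symm))
    have ci := card_tuplesOf_pos' i
    have cm := card_tuplesOf_pos' m
    have cj := card_tuplesOf_pos' j
    have hs : (Real.sqrt (((tuplesOf i).card : ℝ) * ((tuplesOf m).card : ℝ)))⁻¹ *
        (Real.sqrt (((tuplesOf m).card : ℝ) * ((tuplesOf j).card : ℝ)))⁻¹ *
        ((tuplesOf m).card : ℝ)
        = (Real.sqrt (((tuplesOf i).card : ℝ) * ((tuplesOf j).card : ℝ)))⁻¹ := by
      have hmm : Real.sqrt ((tuplesOf m).card : ℝ) * Real.sqrt ((tuplesOf m).card : ℝ)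
          = ((tuplesOf m).card : ℝ) := Real.mul_self_sqrt cm.le
      have e1 : Real.sqrt (((tuplesOf i).card : ℝ) * ((tuplesOf m).card : ℝ)) *
          Real.sqrt (((tuplesOf m).card : ℝ) * ((tuplesOf j).card : ℝ))
          = Real.sqrt (((tuplesOf i).card : ℝ) * ((tuplesOf j).card : ℝ)) *
            ((tuplesOf m).card : ℝ) := by
        rw [Real.sqrt_mul ci.le, Real.sqrt_mul cm.le, Real.sqrt_mul ci.le]
        linear_combination (Real.sqrt ((tuplesOf i).card : ℝ) *
          Real.sqrt ((tuplesOf j).card : ℝ)) * hmm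
      rw [← mul_inv, e1, mul_inv, mul_assoc, inv_mul_cancel₀ cm.ne', mul_one]
    unfold symPow
    rw [Finset.sum_comm (s := tuplesOf i) (t := tuplesOf m)]
    rw [mul_mul_mul_comm, hgh, ← mul_assoc, hs]
  rw [Finset.sum_congr rfl (fun m _ => key m), ← Finset.mul_sum]
  unfold symPow
  congr 1
  rw [sum_tuplesOf_fiberwise]
  symm
  simp_rw [Finset.sum_mul_sum]
  rw [Finset.sum_comm]
  refine Finset.sum_congr rfl fun p _ => ?_
  rw [Finset.sum_comm]
  refine Finset.sum_congr rfl fun r _ => ?_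
  simp_rw [← Finset.prod_mul_distrib, Matrix.mul_apply, Finset.prod_univ_sum,
    Fintype.piFinset_univ]

theorem symPow_diagonal (d : Fin n → ℝ) :
    symPow k (Matrix.diagonal d)
      = Matrix.diagonal (fun i : Sym (Fin n) k => ((i : Multiset (Fin n)).map d).prod) := by
  ext i j
  have hprod : ∀ p q : Fin k → Fin n,
      (∏ ℓ : Fin k, Matrix.diagonal d (p ℓ) (q ℓ)) = if p = q then ∏ ℓ : Fin k, d (p ℓ) else 0 := by
    intro p q
    by_cases h : p = q
    · subst h; simp
    · obtain ⟨ℓ, hℓ⟩ := Function.ne_iff.1 h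
      rw [if_neg h]
      exact Finset.prod_eq_zero (Finset.mem_univ ℓ) (Matrix.diagonal_apply_ne d hℓ)
  unfold symPow
  simp_rw [hprod]
  simp_rw [Finset.sum_ite_eq (tuplesOf j)]
  by_cases hij : i = j
  · subst hij
    have hmem : ∀ p ∈ tuplesOf i, (if p ∈ tuplesOf i then ∏ ℓ : Fin k, d (p ℓ) else 0)
        = ((i : Multiset (Fin n)).map d).prod := by
      intro p hp
      rw [if_pos hp]
      rw [mem_tuplesOf] at hp
      have : (i : Multiset (Fin n)) = ↑(List.ofFn p) := (congrArg Subtype.val hp).symm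
      rw [this]
      simp [Multiset.map_coe, Multiset.prod_coe, List.map_ofFn, List.prod_ofFn,
        Function.comp]
    rw [Finset.sum_congr rfl hmem, Finset.sum_const, nsmul_eq_mul,
      Matrix.diagonal_apply_eq]
    have ci := card_tuplesOf_pos' i
    rw [Real.sqrt_mul_self ci.le, ← mul_assoc, inv_mul_cancel₀ ci.ne', one_mul]
  · have hz : ∀ p ∈ tuplesOf i, (if p ∈ tuplesOf j then ∏ ℓ : Fin k, d (p ℓ) else 0) = 0 := by
      intro p hp
      rw [if_neg]
      intro hpj
      exact hij ((mem_tuplesOf.1 hp).symm.trans (mem_tuplesOf.1 hpj))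
    rw [Finset.sum_congr rfl hz, Finset.sum_const, Matrix.diagonal_apply_ne _ hij]
    simp

theorem symPow_one : symPow k (1 : Matrix (Fin n) (Fin n) ℝ) = 1 := by
  rw [← Matrix.diagonal_one, symPow_diagonal]
  have : (fun i : Sym (Fin n) k => ((i : Multiset (Fin n)).map (fun _ : Fin n => (1:ℝ))).prod)
      = fun _ => 1 := funext fun i => by simp
  rw [this, Matrix.diagonal_one]

theorem sum_count_univ (s : Multiset (Fin n)) :
    ∑ a : Fin n, s.count a = Multiset.card s := by
  rw [← Multiset.toFinset_sum_count_eq]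
  exact (Finset.sum_subset (Finset.subset_univ _)
    (fun a _ ha => Multiset.count_eq_zero.2 fun h => ha (Multiset.mem_toFinset.2 h))).symm

theorem sum_count_sym_const (a b : Fin n) :
    ∑ i : Sym (Fin n) k, (i : Multiset (Fin n)).count a
      = ∑ i : Sym (Fin n) k, (i : Multiset (Fin n)).count b := by
  refine Fintype.sum_equiv (Sym.equivCongr (Equiv.swap a b)) _ _ fun i => ?_
  show (i : Multiset (Fin n)).count a
      = (Multiset.map (⇑(Equiv.swap a b)) (i : Multiset (Fin n))).count b
  have h1 := Multiset.count_map_eq_count' (⇑(Equiv.swap a b)) (i : Multiset (Fin n))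
    (Equiv.injective _) a
  rw [Equiv.swap_apply_left] at h1
  exact h1.symm

theorem choose_id {n k : ℕ} (hn : 1 ≤ n) (hk : 1 ≤ k) :
    n * (n + k - 1).choose n = k * (n + k - 1).choose k := by
  obtain ⟨n', rfl⟩ := Nat.exists_eq_add_of_le hn
  obtain ⟨k', rfl⟩ := Nat.exists_eq_add_of_le hk
  have h1 := Nat.add_one_mul_choose_eq (n' + k') n'
  have h2 := Nat.add_one_mul_choose_eq (n' + k') k'
  have h3 : (n' + k').choose n' = (n' + k').choose k' := by
    rw [← Nat.choose_symm (Nat.le_add_left k' n')]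
    congr 1
    omega
  have he : 1 + n' + (1 + k') - 1 = (n' + k') + 1 := by omega
  rw [he]
  have hn1 : 1 + n' = n' + 1 := by omega
  have hk1 : 1 + k' = k' + 1 := by omega
  rw [hn1, hk1]
  calc (n' + 1) * ((n' + k') + 1).choose (n' + 1)
      = ((n' + k') + 1).choose (n' + 1) * (n' + 1) := by ring
    _ = (n' + k' + 1) * (n' + k').choose n' := h1.symm
    _ = (n' + k' + 1) * (n' + k').choose k' := by rw [h3]
    _ = ((n' + k') + 1).choose (k' + 1) * (k' + 1) := h2
    _ = (k' + 1) * ((n' + k') + 1).choose (k' + 1) := by ring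

theorem sum_count_sym (hn : 1 ≤ n) (hk : 1 ≤ k) (a : Fin n) :
    ∑ i : Sym (Fin n) k, (i : Multiset (Fin n)).count a = (n + k - 1).choose n := by
  have htot : n * ∑ i : Sym (Fin n) k, (i : Multiset (Fin n)).count a
      = k * (n + k - 1).choose k := by
    calc n * ∑ i : Sym (Fin n) k, (i : Multiset (Fin n)).count a
        = ∑ b : Fin n, ∑ i : Sym (Fin n) k, (i : Multiset (Fin n)).count b := by
          rw [Finset.sum_congr rfl fun b _ => sum_count_sym_const b a, Finset.sum_const]
          simp [mul_comm]
      _ = ∑ i : Sym (Fin n) k, ∑ b : Fin n, (i : Multiset (Fin n)).count b := Finset.sum_comm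
      _ = ∑ i : Sym (Fin n) k, k := by
          refine Finset.sum_congr rfl fun i _ => ?_
          rw [sum_count_univ]
          exact i.2
      _ = Fintype.card (Sym (Fin n) k) * k := by rw [Finset.sum_const]; simp [mul_comm]
      _ = (n + k - 1).choose k * k := by
          rw [Sym.card_sym_eq_choose, Fintype.card_fin]
      _ = k * (n + k - 1).choose k := by ring
  have hcid := choose_id hn hk
  exact Nat.eq_of_mul_eq_mul_left (by omega) (htot.trans hcid.symm)

theorem det_symPow_diagonal (hn : 1 ≤ n) (hk : 1 ≤ k) (d : Fin n → ℝ) :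
    (symPow k (Matrix.diagonal d)).det = (∏ a : Fin n, d a) ^ ((n + k - 1).choose n) := by
  rw [symPow_diagonal, Matrix.det_diagonal]
  have h1 : ∀ i : Sym (Fin n) k, ((i : Multiset (Fin n)).map d).prod
      = ∏ a : Fin n, d a ^ (i : Multiset (Fin n)).count a := by
    intro i
    rw [Finset.prod_multiset_map_count]
    exact Finset.prod_subset (Finset.subset_univ _) (fun a _ ha => by
      rw [Multiset.count_eq_zero.2 (fun h => ha (Multiset.mem_toFinset.2 h)), pow_zero])
  rw [Finset.prod_congr rfl fun i _ => h1 i, Finset.prod_comm]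
  rw [Finset.prod_congr rfl fun a (_ : a ∈ Finset.univ) => Finset.prod_pow_eq_pow_sum
    (Finset.univ : Finset (Sym (Fin n) k)) _ (d a)]
  rw [Finset.prod_congr rfl fun a (_ : a ∈ Finset.univ) => by
    rw [sum_count_sym hn hk a]]
  rw [Finset.prod_pow]

theorem symPow_det' {n : ℕ} (k : ℕ) (hk : 1 ≤ k)
    (A : Matrix (Fin n) (Fin n) ℝ) (hA : ∀ a b, A a b = A b a) :
    (symPow k A).det = A.det ^ Nat.choose (n + k - 1) n := by
  rcases Nat.eq_zero_or_pos n with hn | hn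
  · subst hn
    haveI : IsEmpty (Sym (Fin 0) k) := ⟨fun i => by
      have hc : Multiset.card (i : Multiset (Fin 0)) = k := i.2
      have hne : (i : Multiset (Fin 0)) ≠ 0 := by
        intro h; rw [h] at hc; simp at hc; omega
      obtain ⟨x, _⟩ := Multiset.exists_mem_of_ne_zero hne
      exact x.elim0⟩
    rw [Matrix.det_isEmpty, Matrix.det_isEmpty, one_pow]
  · have hH : A.IsHermitian := Matrix.ext fun a b => by
      rw [Matrix.conjTranspose_apply, star_trivial]; exact hA b a
    set d := hH.eigenvalues with hd
    set V := (Matrix.IsHermitian.eigenvectorUnitary hH : Matrix (Fin n) (Fin n) ℝ) with hV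
    have hco : (RCLike.ofReal ∘ hH.eigenvalues : Fin n → ℝ) = d := by
      funext x; simp [RCLike.ofReal_real_eq_id, hd]
    have hspec : A = V * Matrix.diagonal d * star V := by
      have := hH.spectral_theorem
      rw [hco] at this
      exact this
    have hU : V * star V = 1 :=
      Matrix.mem_unitaryGroup_iff.mp (Matrix.IsHermitian.eigenvectorUnitary hH).2
    have hdet1 : (symPow k V).det * (symPow k (star V)).det = 1 := by
      rw [← Matrix.det_mul, ← symPow_mul, hU, symPow_one, Matrix.det_one]
    have hdetA : A.det = (Matrix.diagonal d).det := by
      rw [hspec, Matrix.det_mul, Matrix.det_mul, mul_right_comm, ← Matrix.det_mul, hU,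
        Matrix.det_one, one_mul]
    rw [hspec, symPow_mul, symPow_mul, Matrix.det_mul, Matrix.det_mul,
      det_symPow_diagonal hn hk, ← hspec, hdetA, Matrix.det_diagonal,
      mul_right_comm, hdet1, one_mul]

end SymPowAux

/-- for a symmetric real `n × n` matrix `A` and `k ≥ 1`,
`det(A^{⊙k}) = (det A)^{binom(n+k−1, n)}`. -/
theorem symPow_det {n : ℕ} (k : ℕ) (hk : 1 ≤ k)
    (A : Matrix (Fin n) (Fin n) ℝ) (hA : ∀ a b, A a b = A b a) :
    (symPow k A).det = A.det ^ Nat.choose (n + k - 1) n := by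
  exact SymPowAux.symPow_det' k hk A hA
end

section
/- Let G be a finite undirected graph (possibly with loops), let k ≥ 1, and let i be a multiset of size k over the vertices of G. Let U be the number of vertices of G adjacent to at least one element of i (i.e., U = |⋃_{s ∈ i} N_G(s)|). Then the degree of i in G^{⊙k} satisfies both deg_{G^{⊙k}}(i) ≤ binom(U + k − 1, k) and deg_{G^{⊙k}}(i) ≤ ∏_{s} deg_G(s)^{m_s(i)}, where m_s(i) is the multiplicity of s in i. -/
theorem List.exists_perm_comp_of_ofFn_perm {α : Type*} {n : ℕ} {f g : Fin n → α}
    (h : (List.ofFn f).Perm (List.ofFn g)) : ∃ σ : Equiv.Perm (Fin n), f = g ∘ σ := by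
  classical
  let e : Fin (List.ofFn f).length ≃ Fin (List.ofFn g).length :=
    ⟨h.idxBij, h.symm.idxBij, h.idxBij_symm_leftInverse_idxBij,
      h.idxBij_leftInverse_idxBij_symm⟩
  refine ⟨(finCongr List.length_ofFn.symm).trans (e.trans (finCongr List.length_ofFn)),
    funext fun x => ?_⟩
  have := h.getElem_idxBij_eq_getElem (Fin.cast List.length_ofFn.symm x)
  simp only [List.getElem_ofFn] at this
  simp only [e, Function.comp_apply, Equiv.trans_apply, finCongr_apply, Equiv.coe_fn_mk]
  exact this.symm

theorem Sym.exists_ofFn_eq {α : Type*} {k : ℕ} (i : Sym α k) :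
    ∃ p : Fin k → α, (List.ofFn p : Multiset α) = i := by
  obtain ⟨l, hl⟩ := Quot.exists_rep (i : Multiset α)
  have hlen : l.length = k := by simpa using congrArg Multiset.card hl
  subst hlen
  exact ⟨l.get, by rw [List.ofFn_get]; exact hl⟩

theorem Set.ncard_range_le {α β : Type*} [Finite α] (f : α → β) :
    (Set.range f).ncard ≤ Nat.card α := by
  rw [← Nat.card_coe_set_eq]; exact Finite.card_range_le f

theorem Sym.ncard_setOf_forall_mem_le {α : Type*} [Finite α] (S : Set α) (k : ℕ) :
    {j : Sym α k | ∀ y ∈ j, y ∈ S}.ncard ≤ (S.ncard + k - 1).choose k := by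
  classical
  have := Fintype.ofFinite α
  have hsub : {j : Sym α k | ∀ y ∈ j, y ∈ S} ⊆ Set.range (Sym.map ((↑) : S → α)) := by
    intro j hj
    refine ⟨j.attach.map fun y => ⟨y.1, hj y.1 y.2⟩, ?_⟩
    rw [Sym.map_map]
    exact j.attach_map_coe
  calc _ ≤ (Set.range (Sym.map ((↑) : S → α) (n := k))).ncard := Set.ncard_le_ncard hsub
    _ ≤ Nat.card (Sym S k) := Set.ncard_range_le _
    _ = (S.ncard + k - 1).choose k := by
      rw [Nat.card_eq_fintype_card, Sym.card_sym_eq_choose, ← Nat.card_coe_set_eq,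
        Nat.card_eq_fintype_card]

theorem Fin.prod_comp_eq_prod_pow_count {α M : Type*} [Fintype α] [DecidableEq α]
    [CommMonoid M] {n : ℕ} (f : Fin n → α) (d : α → M) :
    ∏ ℓ, d (f ℓ) = ∏ s, d s ^ (List.ofFn f : Multiset α).count s := by
  calc ∏ ℓ, d (f ℓ) = ((List.ofFn f : Multiset α).map d).prod := by
        rw [Multiset.map_coe, Multiset.prod_coe, List.map_ofFn, List.prod_ofFn]; rfl
    _ = ∏ᶠ s, d s ^ (List.ofFn f : Multiset α).count s := Multiset.prod_map_eq_finprod _ _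
    _ = _ := finprod_eq_prod_of_fintype _

section
variable {V : Type*} {adj : V → V → Prop} {k : ℕ} {i j : Sym V k}

theorem symPowAdj_iff_of_ofFn_eq {p₀ : Fin k → V} (hp₀ : (List.ofFn p₀ : Multiset V) = i) :
    symPowAdj adj k i j ↔
      ∃ q : Fin k → V, (List.ofFn q : Multiset V) = j ∧ ∀ ℓ, adj (p₀ ℓ) (q ℓ) := by
  constructor
  · rintro ⟨p, q, hp, hq, hadj⟩
    obtain ⟨σ, rfl⟩ :=
      List.exists_perm_comp_of_ofFn_perm (Multiset.coe_eq_coe.mp (hp₀.trans hp.symm))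
    exact ⟨q ∘ σ, hq ▸ Multiset.coe_eq_coe.mpr (σ.ofFn_comp_perm q), fun ℓ => hadj (σ ℓ)⟩
  · rintro ⟨q, hq, hadj⟩
    exact ⟨p₀, q, hp₀, hq, hadj⟩

theorem exists_adj_of_symPowAdj (h : symPowAdj adj k i j) {y : V} (hy : y ∈ j) :
    ∃ s ∈ (i : Multiset V), adj s y := by
  obtain ⟨p, q, hp, hq, hadj⟩ := h
  rw [← Sym.mem_coe, ← hq, Multiset.mem_coe, List.mem_ofFn] at hy
  obtain ⟨ℓ, rfl⟩ := hy
  exact ⟨p ℓ, hp ▸ by simp, hadj ℓ⟩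

theorem ncard_symPowAdj_le_choose [Finite V] :
    {j : Sym V k | symPowAdj adj k i j}.ncard ≤
      Nat.choose ({y : V | ∃ s ∈ (i : Multiset V), adj s y}.ncard + k - 1) k :=
  calc _ ≤ {j : Sym V k | ∀ y ∈ j, y ∈ {y | ∃ s ∈ (i : Multiset V), adj s y}}.ncard :=
        Set.ncard_le_ncard fun _ hj _ hy => exists_adj_of_symPowAdj hj hy
    _ ≤ _ := Sym.ncard_setOf_forall_mem_le _ k

theorem ncard_symPowAdj_le_prod [Finite V] {p₀ : Fin k → V}
    (hp₀ : (List.ofFn p₀ : Multiset V) = i) :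
    {j : Sym V k | symPowAdj adj k i j}.ncard ≤ ∏ ℓ, {y : V | adj (p₀ ℓ) y}.ncard := by
  have hsub : {j : Sym V k | symPowAdj adj k i j} ⊆
      Set.range fun q : ∀ ℓ, {y // adj (p₀ ℓ) y} =>
        (Sym.mk (List.ofFn fun ℓ => (q ℓ).1) (by simp) : Sym V k) := by
    intro j hj
    obtain ⟨q, hq, hadj⟩ := (symPowAdj_iff_of_ofFn_eq hp₀).mp hj
    exact ⟨fun ℓ => ⟨q ℓ, hadj ℓ⟩, Sym.coe_injective hq⟩
  calc _ ≤ _ := Set.ncard_le_ncard hsub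
    _ ≤ Nat.card (∀ ℓ, {y // adj (p₀ ℓ) y}) := Set.ncard_range_le _
    _ = ∏ ℓ, {y : V | adj (p₀ ℓ) y}.ncard := by
      rw [Nat.card_pi]; rfl

end

theorem symPow_degree_bounds_general {V : Type*} [Fintype V] [DecidableEq V]
    (adj : V → V → Prop) (k : ℕ) (i : Sym V k) :
    {j : Sym V k | symPowAdj adj k i j}.ncard ≤
        Nat.choose ({y : V | ∃ s ∈ (i : Multiset V), adj s y}.ncard + k - 1) k ∧
    {j : Sym V k | symPowAdj adj k i j}.ncard ≤
        ∏ s : V, ({y : V | adj s y}.ncard) ^ (Multiset.count s (i : Multiset V)) := by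
  obtain ⟨p₀, hp₀⟩ := i.exists_ofFn_eq
  refine ⟨ncard_symPowAdj_le_choose, ?_⟩
  calc _ ≤ _ := ncard_symPowAdj_le_prod hp₀
    _ = _ := by rw [Fin.prod_comp_eq_prod_pow_count p₀ fun s => {y : V | adj s y}.ncard, hp₀]

/-- for a vertex `i` of `G^{⊙k}` (a multiset of size `k` over the vertices of
`G`), with `U` the number of vertices adjacent to at least one element of `i`, the degree of
`i` in `G^{⊙k}` is at most `binom(U + k − 1, k)` and at most `∏_s deg_G(s)^{m_s(i)}`. -/
theorem symPow_degree_bounds {V : Type*} [Fintype V] [DecidableEq V]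
    (adj : V → V → Prop) (hsym : Symmetric adj) (k : ℕ) (hk : 1 ≤ k) (i : Sym V k) :
    {j : Sym V k | symPowAdj adj k i j}.ncard ≤
        Nat.choose ({y : V | ∃ s ∈ (i : Multiset V), adj s y}.ncard + k - 1) k ∧
    {j : Sym V k | symPowAdj adj k i j}.ncard ≤
        ∏ s : V, ({y : V | adj s y}.ncard) ^ (Multiset.count s (i : Multiset V)) :=
  symPow_degree_bounds_general adj k i
end

section
/- Let G be a finite undirected graph (possibly with loops) and write deg_G(v) = |N_G(v)|. In the second symmetric tensor power G^{⊙2}: (i) for every vertex a, the degree of the multiset {a,a} equals binom(deg_G(a)+1, 2); (ii) for all distinct vertices a and b, the degree of the multiset {a,b} equals deg_G(a)·deg_G(b) − binom(|N_G(a) ∩ N_G(b)|, 2). -/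
/-- The vertex `{a, b}` of the second symmetric tensor power. -/
def symPair {V : Type*} (a b : V) : Sym V 2 := Sym.cons a (Sym.cons b Sym.nil)

/-!
The neighbours of `{a, b}` in `G^{⊙2}` are the unordered pairs `{x, y}` with `x ∈ N(a)` and
`y ∈ N(b)`, i.e. the image of `N(a) × N(b)` in `Sym2 V`. Two distinct ordered pairs collide only
as `(x, y)` and `(y, x)` with `x ≠ y` both in `I = N(a) ∩ N(b)`, so exactly `binom(|I|, 2)`
elements are lost. For `a = b` the image is the symmetric square of `N(a)`, of size
`binom(|N(a)| + 1, 2)`.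
-/

open Finset in
theorem Finset.mem_offDiag_inter_of_mk_eq {α : Type*} [DecidableEq α] {s t : Finset α}
    {p q : α × α} (hp : p ∈ s ×ˢ t) (hq : q ∈ s ×ˢ t)
    (hpq : Sym2.mk.uncurry p = Sym2.mk.uncurry q) (hne : p ≠ q) : p ∈ (s ∩ t).offDiag := by
  obtain ⟨x, y⟩ := p
  obtain ⟨u, v⟩ := q
  simp only [mem_product] at hp hq
  rcases Sym2.eq_iff.mp hpq with ⟨rfl, rfl⟩ | ⟨rfl, rfl⟩
  · exact absurd rfl hne
  · exact mem_offDiag.mpr ⟨mem_inter.mpr ⟨hp.1, hq.2⟩, mem_inter.mpr ⟨hq.1, hp.2⟩,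
      fun h => hne (Prod.ext h h.symm)⟩

open Finset in
theorem Finset.card_image_mk_product_add_choose {α : Type*} [DecidableEq α] (s t : Finset α) :
    #((s ×ˢ t).image Sym2.mk.uncurry) + (#(s ∩ t)).choose 2 = #s * #t := by
  set I := s ∩ t
  have hsub : I.offDiag ⊆ s ×ˢ t := fun p hp => by
    simp only [mem_offDiag, mem_inter, I] at hp
    exact mem_product.mpr ⟨hp.1.1, hp.2.1.2⟩
  have hinj :
      Set.InjOn Sym2.mk.uncurry (((s ×ˢ t) \ I.offDiag : Finset (α × α)) : Set (α × α)) := by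
    intro p hp q hq hpq
    simp only [coe_sdiff, Set.mem_sdiff, mem_coe] at hp hq
    by_contra hne
    exact hp.2 (mem_offDiag_inter_of_mk_eq hp.1 hq.1 hpq hne)
  have hdisj : Disjoint (((s ×ˢ t) \ I.offDiag).image Sym2.mk.uncurry)
      (I.offDiag.image Sym2.mk.uncurry) := by
    simp only [disjoint_left, mem_image, mem_sdiff]
    rintro _ ⟨p, ⟨hp, hpI⟩, rfl⟩ ⟨q, hq, hpq⟩
    by_cases hne : p = q
    · exact hpI (hne ▸ hq)
    · exact hpI (mem_offDiag_inter_of_mk_eq hp (hsub hq) hpq.symm hne)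
  have hsplit : (s ×ˢ t).image Sym2.mk.uncurry =
      ((s ×ˢ t) \ I.offDiag).image Sym2.mk.uncurry ∪ I.offDiag.image Sym2.mk.uncurry := by
    rw [← image_union, sdiff_union_of_subset hsub]
  have hoffDiag : 2 * (#I).choose 2 = #I.offDiag := by
    rw [← Sym2.card_image_offDiag, Sym2.two_mul_card_image_offDiag]
  have hle : #I.offDiag ≤ #s * #t := card_product s t ▸ card_le_card hsub
  rw [hsplit, card_union_of_disjoint hdisj, card_image_of_injOn hinj, card_sdiff_of_subset hsub,
    card_product, Sym2.card_image_offDiag]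
  omega

theorem Set.ncard_image_mk_prod_add_choose {α : Type*} {s t : Set α} (hs : s.Finite)
    (ht : t.Finite) :
    (Sym2.mk.uncurry '' (s ×ˢ t)).ncard + (s ∩ t).ncard.choose 2 = s.ncard * t.ncard := by
  classical
  obtain ⟨s, rfl⟩ := hs.exists_finset_coe
  obtain ⟨t, rfl⟩ := ht.exists_finset_coe
  rw [← Finset.coe_product, ← Finset.coe_image, ← Finset.coe_inter, Set.ncard_coe_finset,
    Set.ncard_coe_finset, Set.ncard_coe_finset, Set.ncard_coe_finset]
  exact Finset.card_image_mk_product_add_choose s t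

theorem Set.ncard_image_mk_prod_self {α : Type*} {s : Set α} (hs : s.Finite) :
    (Sym2.mk.uncurry '' (s ×ˢ s)).ncard = (s.ncard + 1).choose 2 := by
  classical
  obtain ⟨s, rfl⟩ := hs.exists_finset_coe
  rw [← Finset.coe_product, ← Finset.coe_image, ← Finset.sym2_eq_image, Set.ncard_coe_finset,
    Set.ncard_coe_finset, Finset.card_sym2]

section symPair

variable {V : Type*}

theorem symPair_eq_equivSym (x y : V) : symPair x y = Sym2.equivSym V s(x, y) := rfl

theorem symPair_eq_symPair_iff {x y x' y' : V} :
    symPair x y = symPair x' y' ↔ x = x' ∧ y = y' ∨ x = y' ∧ y = x' := by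
  rw [symPair_eq_equivSym, symPair_eq_equivSym, Equiv.apply_eq_iff_eq, Sym2.eq_iff]

theorem coe_ofFn_two (p : Fin 2 → V) :
    (↑(List.ofFn p) : Multiset V) = ↑(symPair (p 0) (p 1)) := rfl

theorem symPowAdj_two_symPair_iff (adj : V → V → Prop) (a b : V) (j : Sym V 2) :
    symPowAdj adj 2 (symPair a b) j ↔ ∃ x y, adj a x ∧ adj b y ∧ symPair x y = j := by
  constructor
  · rintro ⟨p, q, hp, hq, hpq⟩
    rw [coe_ofFn_two, Sym.coe_inj, symPair_eq_symPair_iff] at hp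
    rw [coe_ofFn_two, Sym.coe_inj] at hq
    rcases hp with ⟨rfl, rfl⟩ | ⟨rfl, rfl⟩
    · exact ⟨q 0, q 1, hpq 0, hpq 1, hq⟩
    · exact ⟨q 1, q 0, hpq 1, hpq 0, (symPair_eq_symPair_iff.mpr (Or.inr ⟨rfl, rfl⟩)).trans hq⟩
  · rintro ⟨x, y, hx, hy, rfl⟩
    exact ⟨![a, b], ![x, y], rfl, rfl, Fin.forall_fin_two.mpr ⟨hx, hy⟩⟩

theorem setOf_symPowAdj_symPair (adj : V → V → Prop) (a b : V) :
    {j | symPowAdj adj 2 (symPair a b) j} =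
      Sym2.equivSym V '' (Sym2.mk.uncurry '' ({x | adj a x} ×ˢ {y | adj b y})) := by
  ext j
  simp only [symPowAdj_two_symPair_iff, Set.image_image, Set.mem_image, Set.mem_prod,
    Set.mem_ofPred_eq, Prod.exists, Function.uncurry_apply_pair, ← symPair_eq_equivSym, and_assoc]

end symPair

theorem symPow_two_degrees_general {V : Type*} [Fintype V]
    (adj : V → V → Prop) :
    (∀ a : V,
      {j : Sym V 2 | symPowAdj adj 2 (symPair a a) j}.ncard =
        Nat.choose ({y : V | adj a y}.ncard + 1) 2) ∧
    (∀ a b : V, a ≠ b →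
      {j : Sym V 2 | symPowAdj adj 2 (symPair a b) j}.ncard =
        {y : V | adj a y}.ncard * {y : V | adj b y}.ncard
          - Nat.choose ({y : V | adj a y} ∩ {y : V | adj b y}).ncard 2) := by
  have hdeg (a b : V) : {j | symPowAdj adj 2 (symPair a b) j}.ncard =
      (Sym2.mk.uncurry '' ({x | adj a x} ×ˢ {y | adj b y})).ncard := by
    rw [setOf_symPowAdj_symPair, Set.ncard_image_of_injective _ (Sym2.equivSym V).injective]
  refine ⟨fun a => ?_, fun a b _ => ?_⟩
  · rw [hdeg, Set.ncard_image_mk_prod_self (Set.toFinite _)]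
  · rw [hdeg, ← Set.ncard_image_mk_prod_add_choose (Set.toFinite _) (Set.toFinite _),
      Nat.add_sub_cancel]

/-- in `G^{⊙2}`, (i) the degree of `{a,a}` is `binom(deg_G(a)+1, 2)`;
(ii) for `a ≠ b`, the degree of `{a,b}` is
`deg_G(a)·deg_G(b) − binom(|N_G(a) ∩ N_G(b)|, 2)`. -/
theorem symPow_two_degrees {V : Type*} [Fintype V] [DecidableEq V]
    (adj : V → V → Prop) (hsym : Symmetric adj) :
    (∀ a : V,
      {j : Sym V 2 | symPowAdj adj 2 (symPair a a) j}.ncard =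
        Nat.choose ({y : V | adj a y}.ncard + 1) 2) ∧
    (∀ a b : V, a ≠ b →
      {j : Sym V 2 | symPowAdj adj 2 (symPair a b) j}.ncard =
        {y : V | adj a y}.ncard * {y : V | adj b y}.ncard
          - Nat.choose ({y : V | adj a y} ∩ {y : V | adj b y}).ncard 2) :=
  symPow_two_degrees_general adj
end

section
/- Let G be a finite undirected graph (possibly with loops). The number of vertices of G^{⊙2} that carry a loop (i.e., are adjacent to themselves in G^{⊙2}) equals |E_G| + ℓ_d, where |E_G| is the number of edges of G (unordered pairs {a,b}, allowing a = b, with a adjacent to b) and ℓ_d is the number of unordered pairs {a,b} of distinct, non-adjacent vertices of G such that both a and b carry loops. -/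
lemma pair_multiset_eq {α : Type*} {a b c d : α} :
    ({a,b} : Multiset α) = {c,d} ↔ (a=c∧b=d)∨(a=d∧b=c) := by
  constructor
  · intro h
    rcases Multiset.cons_eq_cons.1 h with ⟨h1,h2⟩|⟨h1,cs,h3,h4⟩
    · left; exact ⟨h1, by simpa using h2⟩
    · have : cs = 0 := by
        have := congrArg Multiset.card h3; simpa using this.symm
      subst this
      right
      exact ⟨by simpa using h4.symm, by simpa using h3⟩
  · rintro (⟨rfl,rfl⟩|⟨rfl,rfl⟩); rfl; exact Multiset.cons_swap _ _ _

lemma ofFn_two {α : Type*} (p : Fin 2 → α) : (List.ofFn p : Multiset α) = {p 0, p 1} := by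
  simp [List.ofFn_succ]; rfl

lemma symPair_coe {V : Type*} (a b : V) : (↑(symPair a b) : Multiset V) = {a, b} := rfl

lemma symPair_eq_iff {V : Type*} {a b c d : V} :
    symPair a b = symPair c d ↔ (a=c∧b=d)∨(a=d∧b=c) := by
  rw [← Sym.coe_inj, symPair_coe, symPair_coe, pair_multiset_eq]

lemma exists_symPair {V : Type*} (i : Sym V 2) : ∃ a b, i = symPair a b := by
  obtain ⟨a, b, h⟩ := Multiset.card_eq_two.1 i.2
  exact ⟨a, b, Sym.coe_injective h⟩

lemma symPowAdj_pair_self {V : Type*} (adj : V → V → Prop) (hsym : Symmetric adj) (a b : V) :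
    symPowAdj adj 2 (symPair a b) (symPair a b) ↔ adj a b ∨ (adj a a ∧ adj b b) := by
  constructor
  · rintro ⟨p, q, hp, hq, h⟩
    rw [ofFn_two, symPair_coe, pair_multiset_eq] at hp hq
    have h0 := h 0; have h1 := h 1
    rcases hp with ⟨e1,e2⟩|⟨e1,e2⟩ <;> rcases hq with ⟨f1,f2⟩|⟨f1,f2⟩ <;>
      rw [e1, f1] at h0 <;> rw [e2, f2] at h1 <;>
      first
        | exact Or.inr ⟨h0, h1⟩
        | exact Or.inr ⟨h1, h0⟩
        | exact Or.inl h0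
        | exact Or.inl (hsym h0)
  · rintro (h | ⟨h1, h2⟩)
    · exact ⟨![a,b], ![b,a], by rw [ofFn_two]; rfl, by
        rw [ofFn_two, symPair_coe]; exact Multiset.cons_swap _ _ _, by
        intro ℓ; fin_cases ℓ <;> simp [h, hsym h]⟩
    · exact ⟨![a,b], ![a,b], by rw [ofFn_two]; rfl, by rw [ofFn_two]; rfl, by
        intro ℓ; fin_cases ℓ <;> simp [h1, h2]⟩

/-- the number of vertices of `G^{⊙2}` carrying a loop equals `|E_G| + ℓ_d`,
where `|E_G|` is the number of edges of `G` (unordered pairs `{a,b}`, allowing `a = b`, with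
`a` adjacent to `b`) and `ℓ_d` is the number of unordered pairs of distinct, non-adjacent
vertices both carrying loops. -/
theorem symPow_two_loops {V : Type*} [Fintype V] (adj : V → V → Prop)
    (hsym : Symmetric adj) :
    {i : Sym V 2 | symPowAdj adj 2 i i}.ncard =
      {e : Sym V 2 | ∃ a b : V, e = symPair a b ∧ adj a b}.ncard +
      {e : Sym V 2 | ∃ a b : V, a ≠ b ∧ e = symPair a b ∧
        ¬ adj a b ∧ adj a a ∧ adj b b}.ncard := by
  classical
  have hU : {i : Sym V 2 | symPowAdj adj 2 i i} =
      {e : Sym V 2 | ∃ a b : V, e = symPair a b ∧ adj a b} ∪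
      {e : Sym V 2 | ∃ a b : V, a ≠ b ∧ e = symPair a b ∧
        ¬ adj a b ∧ adj a a ∧ adj b b} := by
    ext i
    obtain ⟨a, b, rfl⟩ := exists_symPair i
    simp only [Set.mem_setOf_eq, Set.mem_union, symPowAdj_pair_self adj hsym]
    constructor
    · rintro (h | ⟨h1, h2⟩)
      · exact Or.inl ⟨a, b, rfl, h⟩
      · by_cases hab : adj a b
        · exact Or.inl ⟨a, b, rfl, hab⟩
        · have hne : a ≠ b := by rintro rfl; exact hab h1
          exact Or.inr ⟨a, b, hne, rfl, hab, h1, h2⟩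
    · rintro (⟨c, d, hcd, h⟩ | ⟨c, d, hne, hcd, hna, h1, h2⟩)
      · rcases symPair_eq_iff.1 hcd with ⟨rfl,rfl⟩|⟨rfl,rfl⟩
        · exact Or.inl h
        · exact Or.inl (hsym h)
      · rcases symPair_eq_iff.1 hcd with ⟨rfl,rfl⟩|⟨rfl,rfl⟩
        · exact Or.inr ⟨h1, h2⟩
        · exact Or.inr ⟨h2, h1⟩
  have hD : Disjoint {e : Sym V 2 | ∃ a b : V, e = symPair a b ∧ adj a b}
      {e : Sym V 2 | ∃ a b : V, a ≠ b ∧ e = symPair a b ∧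
        ¬ adj a b ∧ adj a a ∧ adj b b} := by
    rw [Set.disjoint_left]
    rintro e ⟨a, b, rfl, hab⟩ ⟨c, d, hne, hcd, hna, _, _⟩
    rcases symPair_eq_iff.1 hcd with ⟨rfl,rfl⟩|⟨rfl,rfl⟩
    · exact hna hab
    · exact hna (hsym hab)
  rw [hU, Set.ncard_union_eq hD (Set.toFinite _) (Set.toFinite _)]
end

section
/- Let n ≥ 2 and k ≥ 1, and let P_n be the path graph with vertex set {1,…,n} in which i and j are adjacent if and only if |i−j| = 1. Then P_n^{⊙k} has exactly ⌈(k+1)/2⌉ connected components. -/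
def pathAdj (n : ℕ) (a b : Fin n) : Prop := a.val + 1 = b.val ∨ b.val + 1 = a.val

namespace SymPow15

lemma exists_tuple {V : Type*} {k : ℕ} (s : Sym V k) :
    ∃ p : Fin k → V, (↑(List.ofFn p) : Multiset V) = ↑s := by
  obtain ⟨s, hs⟩ := s
  obtain ⟨l, rfl⟩ : ∃ l : List V, (↑l : Multiset V) = s := ⟨s.toList, s.coe_toList⟩
  simp only [Multiset.coe_card] at hs
  subst hs
  exact ⟨l.get, by rw [List.ofFn_get]; rfl⟩

variable {n k : ℕ}

/-- count of even vertices -/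
def mc (s : Multiset (Fin n)) : ℕ := Multiset.countP (fun a => a.val % 2 = 0) s

lemma mc_le_card (s : Multiset (Fin n)) : mc s ≤ Multiset.card s :=
  Multiset.countP_le_card _ s

lemma mc_flip {p q : Fin k → Fin n} (h : ∀ ℓ, pathAdj n (p ℓ) (q ℓ)) :
    mc (↑(List.ofFn q) : Multiset (Fin n)) = k - mc (↑(List.ofFn p) : Multiset (Fin n)) := by
  have key : ∀ r : Fin k → Fin n,
      mc (↑(List.ofFn r) : Multiset (Fin n))
        = Multiset.card (Multiset.filter (fun ℓ => (r ℓ).val % 2 = 0)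
            (↑(List.finRange k) : Multiset (Fin k))) := by
    intro r
    rw [mc, List.ofFn_eq_map, ← Multiset.map_coe, Multiset.countP_map]
  rw [key, key]
  have hfil : Multiset.filter (fun ℓ => (q ℓ).val % 2 = 0) (↑(List.finRange k) : Multiset (Fin k))
      = Multiset.filter (fun ℓ => ¬ ((p ℓ).val % 2 = 0)) (↑(List.finRange k) : Multiset (Fin k)) := by
    apply Multiset.filter_congr
    intro ℓ _
    rcases h ℓ with h' | h' <;> omega
  rw [hfil]
  have := Multiset.filter_add_not (fun ℓ => (p ℓ).val % 2 = 0)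
    (↑(List.finRange k) : Multiset (Fin k))
  have hcard := congrArg Multiset.card this
  rw [Multiset.card_add] at hcard
  simp only [Multiset.coe_card, List.length_finRange] at hcard ⊢
  omega

variable (hn : 2 ≤ n)

/-- the graph -/
abbrev G (n k : ℕ) : SimpleGraph (Sym (Fin n) k) := SimpleGraph.fromRel (symPowAdj (pathAdj n) k)

lemma reach_of_rel {i j : Sym (Fin n) k} (h : symPowAdj (pathAdj n) k i j) :
    (G n k).Reachable i j := by
  by_cases hij : i = j
  · exact hij ▸ SimpleGraph.Reachable.refl i
  · exact SimpleGraph.Adj.reachable ⟨hij, Or.inl h⟩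

lemma step_rel (s : Sym (Fin n) k) (f : Fin n → Fin n) (hf : ∀ v, pathAdj n v (f v)) :
    symPowAdj (pathAdj n) k s (Sym.map f s) := by
  obtain ⟨p, hp⟩ := exists_tuple s
  refine ⟨p, f ∘ p, hp, ?_, fun ℓ => hf (p ℓ)⟩
  have : (List.ofFn (f ∘ p)) = List.map f (List.ofFn p) := by
    rw [List.ofFn_eq_map, List.ofFn_eq_map, List.map_map]
  rw [this, ← Multiset.map_coe, hp]
  rfl

/-- the stepping function: 0 ↦ 1, v ↦ v - 1 otherwise -/
def fstep (v : Fin n) : Fin n :=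
  if v.val = 0 then ⟨1, hn⟩ else ⟨v.val - 1, by omega⟩

lemma fstep_adj (v : Fin n) : pathAdj n v (fstep hn v) := by
  unfold fstep pathAdj
  split_ifs with h <;> [left; right] <;> simp <;> omega

/-- invariant under adjacency -/
lemma inv_adj {i j : Sym (Fin n) k} (h : symPowAdj (pathAdj n) k i j) :
    min (mc (↑i : Multiset (Fin n))) (k - mc (↑i : Multiset (Fin n)))
      = min (mc (↑j : Multiset (Fin n))) (k - mc (↑j : Multiset (Fin n))) := by
  obtain ⟨p, q, hp, hq, hpq⟩ := h
  have h1 := mc_flip hpq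
  have h2 : mc (↑(List.ofFn p) : Multiset (Fin n)) ≤ k := by
    have := mc_le_card (↑(List.ofFn p) : Multiset (Fin n))
    simpa using this
  rw [hp, hq] at h1
  rw [hp] at h2
  omega

def gfun (s : Sym (Fin n) k) : ℕ :=
  min (mc (↑s : Multiset (Fin n))) (k - mc (↑s : Multiset (Fin n)))

lemma gfun_adj {i j : Sym (Fin n) k} (h : (G n k).Adj i j) : gfun i = gfun j := by
  rcases h with ⟨_, h | h⟩
  · exact inv_adj h
  · exact (inv_adj h).symm

lemma gfun_reach {i j : Sym (Fin n) k} (h : (G n k).Reachable i j) : gfun i = gfun j := by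
  obtain ⟨w⟩ := h
  induction w with
  | nil => rfl
  | cons hadj _ ih => exact (gfun_adj hadj).trans ih

def vz : Fin n := ⟨0, by omega⟩
def vo : Fin n := ⟨1, hn⟩

def csym (a : ℕ) (h : a ≤ k) : Sym (Fin n) k :=
  ⟨Multiset.replicate a (vz hn) + Multiset.replicate (k - a) (vo hn), by
    rw [Multiset.card_add, Multiset.card_replicate, Multiset.card_replicate]; omega⟩

lemma countP_replicate (p : Fin n → Prop) [DecidablePred p] (a : Fin n) (m : ℕ) :
    Multiset.countP p (Multiset.replicate m a) = if p a then m else 0 := by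
  induction m with
  | zero => simp
  | succ m ih =>
    rw [Multiset.replicate_succ, Multiset.countP_cons, ih]
    split_ifs <;> omega

lemma mc_csym (a : ℕ) (h : a ≤ k) : mc (↑(csym hn a h) : Multiset (Fin n)) = a := by
  show mc (Multiset.replicate a (vz hn) + Multiset.replicate (k - a) (vo hn)) = a
  unfold mc
  rw [Multiset.countP_add, countP_replicate, countP_replicate]
  simp [vz, vo]

lemma gfun_csym (a : ℕ) (h : a ≤ k) : gfun (csym hn a h) = min a (k - a) := by
  rw [gfun, mc_csym]

lemma csym_step (a : ℕ) (h : a ≤ k) :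
    Sym.map (fstep hn) (csym hn a h) = csym hn (k - a) (Nat.sub_le k a) := by
  apply Subtype.ext
  show Multiset.map (fstep hn) (Multiset.replicate a (vz hn) + Multiset.replicate (k - a) (vo hn))
    = Multiset.replicate (k - a) (vz hn) + Multiset.replicate (k - (k - a)) (vo hn)
  have hz : fstep hn (vz hn) = vo hn := by simp [fstep, vz, vo]
  have ho : fstep hn (vo hn) = vz hn := by simp [fstep, vo, vz]
  rw [Multiset.map_add, Multiset.map_replicate, Multiset.map_replicate, hz, ho,
    Nat.sub_sub_self h, add_comm]

lemma csym_reach (a : ℕ) (h : a ≤ k) :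
    (G n k).Reachable (csym hn a h) (csym hn (k - a) (Nat.sub_le k a)) := by
  have := step_rel (csym hn a h) (fstep hn) (fstep_adj hn)
  rw [csym_step] at this
  exact reach_of_rel this

lemma base_ms (t : Multiset (Fin n)) (ht : ∀ v ∈ t, v.val ≤ 1) :
    t = Multiset.replicate (Multiset.count (vz hn) t) (vz hn)
      + Multiset.replicate (Multiset.card t - Multiset.count (vz hn) t) (vo hn) := by
  induction t using Multiset.induction with
  | empty => simp
  | cons v t ih =>
    have hv : v ∈ v ::ₘ t := Multiset.mem_cons_self v t
    have hv1 : v.val ≤ 1 := ht v hv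
    have ht' : ∀ w ∈ t, w.val ≤ 1 := fun w hw => ht w (Multiset.mem_cons_of_mem hw)
    have hct : Multiset.count (vz hn) t ≤ Multiset.card t := Multiset.count_le_card _ _
    rcases Nat.le_one_iff_eq_zero_or_eq_one.mp hv1 with h0 | h1
    · have hvz : v = vz hn := Fin.ext h0
      subst hvz
      rw [Multiset.count_cons_self, Multiset.card_cons, Multiset.replicate_succ,
        Multiset.cons_add]
      have : Multiset.card t + 1 - (Multiset.count (vz hn) t + 1)
          = Multiset.card t - Multiset.count (vz hn) t := by omega
      rw [this]
      exact congrArg _ (ih ht')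
    · have hvo : v = vo hn := Fin.ext h1
      subst hvo
      have hne : vz hn ≠ vo hn := by simp [vz, vo, Fin.ext_iff]
      rw [Multiset.count_cons_of_ne hne, Multiset.card_cons]
      have : Multiset.card t + 1 - Multiset.count (vz hn) t
          = (Multiset.card t - Multiset.count (vz hn) t) + 1 := by omega
      rw [this, Multiset.replicate_succ]
      calc vo hn ::ₘ t
          = vo hn ::ₘ (Multiset.replicate (Multiset.count (vz hn) t) (vz hn)
            + Multiset.replicate (Multiset.card t - Multiset.count (vz hn) t) (vo hn)) := by
              rw [← ih ht']
        _ = Multiset.replicate (Multiset.count (vz hn) t) (vz hn)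
            + (vo hn ::ₘ Multiset.replicate (Multiset.card t - Multiset.count (vz hn) t)
              (vo hn)) := by
              rw [add_comm, ← Multiset.cons_add, add_comm]

/-- the weight measure -/
def wt (s : Sym (Fin n) k) : ℕ := (Multiset.map (fun v : Fin n => v.val - 1) (↑s : Multiset (Fin n))).sum

lemma descent : ∀ (N : ℕ) (s : Sym (Fin n) k), wt s ≤ N →
    ∃ (a : ℕ) (h : a ≤ k), (G n k).Reachable s (csym hn a h) := by
  intro N
  induction N with
  | zero =>
    intro s hs
    have hall : ∀ v ∈ (↑s : Multiset (Fin n)), v.val ≤ 1 := by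
      intro v hv
      have h0 : wt s = 0 := Nat.le_zero.mp hs
      have := Multiset.sum_eq_zero_iff.mp h0 (v.val - 1) (Multiset.mem_map_of_mem _ hv)
      omega
    have hcard : Multiset.card (↑s : Multiset (Fin n)) = k := s.2
    have hc := Multiset.count_le_card (vz hn) (↑s : Multiset (Fin n))
    refine ⟨Multiset.count (vz hn) (↑s : Multiset (Fin n)), by omega, ?_⟩
    have : s = csym hn (Multiset.count (vz hn) (↑s : Multiset (Fin n))) (by omega) := by
      apply Subtype.ext
      have := base_ms hn (↑s : Multiset (Fin n)) hall
      rw [hcard] at this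
      exact this
    rw [← this]
  | succ N ih =>
    intro s hs
    by_cases hall : ∀ v ∈ (↑s : Multiset (Fin n)), v.val ≤ 1
    · -- same as base case
      have hcard : Multiset.card (↑s : Multiset (Fin n)) = k := s.2
      have hc := Multiset.count_le_card (vz hn) (↑s : Multiset (Fin n))
      refine ⟨Multiset.count (vz hn) (↑s : Multiset (Fin n)), by omega, ?_⟩
      have : s = csym hn (Multiset.count (vz hn) (↑s : Multiset (Fin n))) (by omega) := by
        apply Subtype.ext
        have := base_ms hn (↑s : Multiset (Fin n)) hall
        rw [hcard] at this
        exact this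
      rw [← this]
    · push_neg at hall
      obtain ⟨v, hv, hv2⟩ := hall
      have hstep := step_rel (s := s) (fstep hn) (fstep_adj hn)
      have hwt : wt (Sym.map (fstep hn) s) < wt s := by
        have hcoe : (↑(Sym.map (fstep hn) s) : Multiset (Fin n))
            = Multiset.map (fstep hn) (↑s : Multiset (Fin n)) := rfl
        rw [wt, hcoe, Multiset.map_map]
        apply Multiset.sum_lt_sum
        · intro i _
          simp only [Function.comp_apply, fstep]
          split_ifs <;> simp <;> omega
        · refine ⟨v, hv, ?_⟩
          simp only [Function.comp_apply, fstep]
          split_ifs <;> simp <;> omega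
      obtain ⟨a, ha, hr⟩ := ih (Sym.map (fstep hn) s) (by omega)
      exact ⟨a, ha, (reach_of_rel hstep).trans hr⟩

lemma key_reach (s : Sym (Fin n) k) :
    ∃ (a : ℕ) (h : a ≤ k), (G n k).Reachable s (csym hn a h) :=
  descent hn (wt s) s le_rfl

lemma reach_of_gfun_eq (hn : 2 ≤ n) {s t : Sym (Fin n) k} (h : gfun s = gfun t) :
    (G n k).Reachable s t := by
  obtain ⟨a, ha, hra⟩ := key_reach hn s
  obtain ⟨b, hb, hrb⟩ := key_reach hn t
  have hga : gfun s = min a (k - a) := (gfun_reach hra).trans (gfun_csym hn a ha)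
  have hgb : gfun t = min b (k - b) := (gfun_reach hrb).trans (gfun_csym hn b hb)
  have hab : b = a ∨ b = k - a := by omega
  rcases hab with rfl | rfl
  · exact hra.trans hrb.symm
  · exact (hra.trans (csym_reach hn a ha)).trans hrb.symm

end SymPow15

/-- for `n ≥ 2` and `k ≥ 1`, the symmetric tensor power `P_n^{⊙k}` of the path
graph has exactly `⌈(k+1)/2⌉ = (k+2)/2` connected components. -/
theorem symPow_path_components (n k : ℕ) (hn : 2 ≤ n) (hk : 1 ≤ k) :
    Nat.card (SimpleGraph.fromRel (symPowAdj (pathAdj n) k)).ConnectedComponent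
      = (k + 2) / 2 := by
  classical
  open SymPow15 in
  have hwalk : ∀ (v w : Sym (Fin n) k) (p : (G n k).Walk v w), p.IsPath →
      gfun v = gfun w := fun v w p _ => gfun_reach ⟨p⟩
  let φ : (G n k).ConnectedComponent → ℕ :=
    SimpleGraph.ConnectedComponent.lift SymPow15.gfun hwalk
  have hφmk : ∀ s, φ (SimpleGraph.connectedComponentMk _ s) = SymPow15.gfun s := fun s => rfl
  have hφlt : ∀ c, φ c < k / 2 + 1 := by
    refine SimpleGraph.ConnectedComponent.ind ?_
    intro s
    rw [hφmk]
    have := SymPow15.mc_le_card (↑s : Multiset (Fin n))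
    have hcard : Multiset.card (↑s : Multiset (Fin n)) = k := s.2
    rw [hcard] at this
    unfold SymPow15.gfun
    omega
  let ψ : (G n k).ConnectedComponent → Fin (k / 2 + 1) := fun c => ⟨φ c, hφlt c⟩
  have hbij : Function.Bijective ψ := by
    constructor
    · intro c d hcd
      have hφcd : φ c = φ d := congrArg Fin.val hcd
      revert hφcd
      refine SimpleGraph.ConnectedComponent.ind₂ ?_ c d
      intro s t h
      rw [hφmk, hφmk] at h
      exact SimpleGraph.ConnectedComponent.sound (SymPow15.reach_of_gfun_eq hn h)
    · rintro ⟨v, hv⟩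
      have hvk : v ≤ k / 2 := by omega
      refine ⟨SimpleGraph.connectedComponentMk _ (SymPow15.csym hn v (by omega)), ?_⟩
      have h1 : φ (SimpleGraph.connectedComponentMk _ (SymPow15.csym hn v (by omega))) = v := by
        rw [hφmk, SymPow15.gfun_csym]; omega
      exact Fin.ext h1
  have := Nat.card_congr (Equiv.ofBijective ψ hbij)
  rw [this, Nat.card_eq_fintype_card, Fintype.card_fin]
  omega
end

section
/- Let n ≥ 2 and let P_n be the path graph with vertex set {1,…,n} in which i and j are adjacent if and only if |i−j| = 1. (a) If k ≥ 1 is odd, then no vertex of P_n^{⊙k} is adjacent to itself (P_n^{⊙k} has no loops). (b) If k = 2ℓ with ℓ ≥ 1, then exactly binom(n+ℓ−2, ℓ) vertices of P_n^{⊙k} are adjacent to themselves. -/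
/-- The "doubling" operation on multisets of naturals: `u ↦ u + (u+1)`. -/
def symD (u : Multiset ℕ) : Multiset ℕ := u + u.map (· + 1)

lemma symD_count_zero (u : Multiset ℕ) : Multiset.count 0 (symD u) = Multiset.count 0 u := by
  have h : Multiset.count 0 (u.map (· + 1)) = 0 := by
    rw [Multiset.count_eq_zero]; simp
  simp [symD, h]

lemma symD_count_succ (u : Multiset ℕ) (j : ℕ) :
    Multiset.count (j + 1) (symD u) = Multiset.count (j + 1) u + Multiset.count j u := by
  have h : Multiset.count (j + 1) (u.map (· + 1)) = Multiset.count j u :=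
    Multiset.count_map_eq_count' _ u (fun a b => by omega) j
  simp [symD, h]

lemma symD_inj : Function.Injective symD := by
  intro u v h
  ext j
  induction j with
  | zero =>
    have hu := symD_count_zero u
    have hv := symD_count_zero v
    rw [h] at hu; omega
  | succ j ih =>
    have hu := symD_count_succ u j
    have hv := symD_count_succ v j
    rw [h] at hu; omega

lemma symD_card (u : Multiset ℕ) : Multiset.card (symD u) = 2 * Multiset.card u := by
  simp [symD]; ring

/-- Key decomposition: a multiset with a loop witness decomposes as `symD u`. -/
lemma symDecomp {ι : Type*} (s : Multiset ι) (p q : ι → ℕ)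
    (hpq : s.map p = s.map q)
    (hadj : ∀ ℓ ∈ s, p ℓ + 1 = q ℓ ∨ q ℓ + 1 = p ℓ) :
    ∃ u : Multiset ℕ, symD u = s.map p ∧ ∀ x ∈ u, x + 1 ∈ s.map p := by
  classical
  set S := s.filter (fun ℓ => p ℓ + 1 = q ℓ) with hS
  set S' := s.filter (fun ℓ => ¬ (p ℓ + 1 = q ℓ)) with hS'
  have hSadj : ∀ ℓ ∈ S, p ℓ + 1 = q ℓ := fun ℓ hℓ => (Multiset.mem_filter.1 hℓ).2
  have hS'adj : ∀ ℓ ∈ S', q ℓ + 1 = p ℓ := by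
    intro ℓ hℓ
    rw [hS', Multiset.mem_filter] at hℓ
    rcases hadj ℓ hℓ.1 with h | h
    · exact absurd h hℓ.2
    · exact h
  set a : ℕ → ℕ := fun j => Multiset.count j (S.map q) with ha
  set b : ℕ → ℕ := fun j => Multiset.count j (S'.map p) with hb
  have keyS : ∀ j, Multiset.count j (S.map p) = a (j + 1) := by
    intro j
    show Multiset.count j (S.map p) = Multiset.count (j + 1) (S.map q)
    rw [Multiset.count_map, Multiset.count_map]
    congr 1
    apply Multiset.filter_congr
    intro ℓ hℓ
    have := hSadj ℓ hℓ
    omega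
  have keyS' : ∀ j, Multiset.count j (S'.map q) = b (j + 1) := by
    intro j
    show Multiset.count j (S'.map q) = Multiset.count (j + 1) (S'.map p)
    rw [Multiset.count_map, Multiset.count_map]
    congr 1
    apply Multiset.filter_congr
    intro ℓ hℓ
    have := hS'adj ℓ hℓ
    omega
  have hsplitp : S.map p + S'.map p = s.map p := by
    rw [← Multiset.map_add, Multiset.filter_add_not]
  have hsplitq : S.map q + S'.map q = s.map q := by
    rw [← Multiset.map_add, Multiset.filter_add_not]
  have hrel : ∀ j, a (j + 1) + b j = a j + b (j + 1) := by
    intro j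
    have h1 : Multiset.count j (s.map p) = a (j + 1) + b j := by
      rw [← hsplitp, Multiset.count_add, keyS]
    have h2 : Multiset.count j (s.map q) = a j + b (j + 1) := by
      rw [← hsplitq, Multiset.count_add, keyS', ha]
    rw [hpq] at h1
    omega
  have ha0 : a 0 = 0 := by
    rw [ha, Multiset.count_eq_zero]
    intro hmem
    obtain ⟨ℓ, hℓ, h0⟩ := Multiset.mem_map.1 hmem
    have := hSadj ℓ hℓ
    omega
  have hb0 : b 0 = 0 := by
    rw [hb, Multiset.count_eq_zero]
    intro hmem
    obtain ⟨ℓ, hℓ, h0⟩ := Multiset.mem_map.1 hmem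
    have := hS'adj ℓ hℓ
    omega
  have hab : ∀ j, a j = b j := by
    intro j
    induction j with
    | zero => omega
    | succ j ih => have := hrel j; omega
  have hqp : S.map q = S'.map p := by
    ext j
    exact hab j
  have hmapS : (S.map p).map (· + 1) = S.map q := by
    rw [Multiset.map_map]
    apply Multiset.map_congr rfl
    intro ℓ hℓ
    exact hSadj ℓ hℓ
  refine ⟨S.map p, ?_, ?_⟩
  · rw [symD, hmapS, hqp, hsplitp]
  · intro x hx
    obtain ⟨ℓ, hℓ, rfl⟩ := Multiset.mem_map.1 hx
    rw [hSadj ℓ hℓ, hpq]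
    exact Multiset.mem_map_of_mem q (Multiset.mem_filter.1 hℓ).1

def pe0 (n : ℕ) (a : Fin (n - 1)) : Fin n := ⟨a.1, by have := a.2; omega⟩
def pe1 (n : ℕ) (a : Fin (n - 1)) : Fin n := ⟨a.1 + 1, by have := a.2; omega⟩

def symF (n : ℕ) (m : Multiset (Fin (n - 1))) : Multiset (Fin n) :=
  m.map (pe0 n) + m.map (pe1 n)

lemma symF_val (n : ℕ) (m : Multiset (Fin (n - 1))) :
    (symF n m).map Fin.val = symD (m.map Fin.val) := by
  simp only [symF, symD, Multiset.map_add, Multiset.map_map]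
  rfl

lemma symF_card (n : ℕ) (m : Multiset (Fin (n - 1))) :
    Multiset.card (symF n m) = 2 * Multiset.card m := by
  simp [symF]; ring

lemma symF_inj (n : ℕ) : Function.Injective (symF n) := by
  intro m m' h
  have h2 : symD (m.map Fin.val) = symD (m'.map Fin.val) := by
    rw [← symF_val, ← symF_val, h]
  exact Multiset.map_injective Fin.val_injective (symD_inj h2)

lemma loop_of_symF (n l : ℕ) (m : Multiset (Fin (n - 1))) (hm : Multiset.card m = l)
    (i : Sym (Fin n) (2 * l)) (hi : (↑i : Multiset (Fin n)) = symF n m) :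
    symPowAdj (pathAdj n) (2 * l) i i := by
  classical
  set L := m.toList with hLdef
  have hL : (↑L : Multiset (Fin (n - 1))) = m := m.coe_toList
  have hlen : L.length = l := by rw [Multiset.length_toList, hm]
  set p : Fin (2 * l) → Fin n := fun ℓ =>
    if h : ℓ.1 < l then pe0 n (L.get ⟨ℓ.1, by omega⟩)
    else pe1 n (L.get ⟨ℓ.1 - l, by have := ℓ.2; omega⟩) with hp
  set q : Fin (2 * l) → Fin n := fun ℓ =>
    if h : ℓ.1 < l then pe1 n (L.get ⟨ℓ.1, by omega⟩)
    else pe0 n (L.get ⟨ℓ.1 - l, by have := ℓ.2; omega⟩) with hq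
  have hofp : List.ofFn p = L.map (pe0 n) ++ L.map (pe1 n) := by
    apply List.ext_getElem
    · simp [hlen]; omega
    · intro j h1 h2
      have hj : j < 2 * l := by simpa using h1
      rw [List.getElem_ofFn]
      by_cases hc : j < l
      · rw [List.getElem_append_left (by simp [hlen]; omega)]
        simp [hp, hc, List.get_eq_getElem]
      · rw [List.getElem_append_right (by simp [hlen]; omega)]
        simp [hp, hc, List.get_eq_getElem, hlen]
  have hofq : List.ofFn q = L.map (pe1 n) ++ L.map (pe0 n) := by
    apply List.ext_getElem
    · simp [hlen]; omega
    · intro j h1 h2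
      have hj : j < 2 * l := by simpa using h1
      rw [List.getElem_ofFn]
      by_cases hc : j < l
      · rw [List.getElem_append_left (by simp [hlen]; omega)]
        simp [hq, hc, List.get_eq_getElem]
      · rw [List.getElem_append_right (by simp [hlen]; omega)]
        simp [hq, hc, List.get_eq_getElem, hlen]
  refine ⟨p, q, ?_, ?_, ?_⟩
  · rw [hofp, hi]
    simp [symF, ← hL]
  · rw [hofq, hi]
    simp [symF, ← hL]
    exact List.perm_append_comm
  · intro ℓ
    by_cases hc : ℓ.1 < l
    · simp only [hp, hq, dif_pos hc]
      left; rfl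
    · simp only [hp, hq, dif_neg hc]
      right; rfl

lemma symF_of_loop (n l : ℕ) (i : Sym (Fin n) (2 * l))
    (h : symPowAdj (pathAdj n) (2 * l) i i) :
    ∃ m : Multiset (Fin (n - 1)), Multiset.card m = l ∧ symF n m = ↑i := by
  obtain ⟨p, q, hp, hq, hadj⟩ := h
  set s : Multiset (Fin (2 * l)) := ↑(List.finRange (2 * l)) with hs
  set P : Fin (2 * l) → ℕ := fun ℓ => (p ℓ).val with hP
  set Q : Fin (2 * l) → ℕ := fun ℓ => (q ℓ).val with hQ
  have hsP : s.map P = Multiset.map Fin.val (↑i : Multiset (Fin n)) := by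
    rw [hs, ← hp, Multiset.map_coe, Multiset.map_coe, List.map_ofFn, ← List.ofFn_eq_map]
    rfl
  have hsQ : s.map Q = Multiset.map Fin.val (↑i : Multiset (Fin n)) := by
    rw [hs, ← hq, Multiset.map_coe, Multiset.map_coe, List.map_ofFn, ← List.ofFn_eq_map]
    rfl
  have hPQ : s.map P = s.map Q := by rw [hsP, hsQ]
  have hadj' : ∀ ℓ ∈ s, P ℓ + 1 = Q ℓ ∨ Q ℓ + 1 = P ℓ := fun ℓ _ => hadj ℓ
  obtain ⟨u, hDu, hbound⟩ := symDecomp s P Q hPQ hadj'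
  have hx : ∀ x ∈ u, x < n - 1 := by
    intro x hxu
    have h1 := hbound x hxu
    rw [hsP] at h1
    obtain ⟨a, _, haa⟩ := Multiset.mem_map.1 h1
    have := a.2
    omega
  refine ⟨u.pmap (fun x h => (⟨x, h⟩ : Fin (n - 1))) hx, ?_, ?_⟩
  · have hcard : Multiset.card (symD u) = 2 * l := by
      rw [hDu, hsP, Multiset.card_map]
      exact i.2
    rw [Multiset.card_pmap]
    have := symD_card u
    omega
  · have hmv : (u.pmap (fun x h => (⟨x, h⟩ : Fin (n - 1))) hx).map Fin.val = u := by
      rw [Multiset.map_pmap]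
      exact (Multiset.pmap_eq_map _ id u hx).trans (Multiset.map_id u)
    apply Multiset.map_injective Fin.val_injective
    rw [symF_val, hmv, hDu, hsP]

/-- for the path graph `P_n` (`n ≥ 2`): (a) if `k` is odd then `P_n^{⊙k}` has
no loops; (b) if `k = 2l` with `l ≥ 1`, then exactly `binom(n+l−2, l)` vertices of
`P_n^{⊙k}` are adjacent to themselves. -/
theorem symPow_path_loops (n : ℕ) (hn : 2 ≤ n) :
    (∀ k : ℕ, 1 ≤ k → Odd k → ∀ i : Sym (Fin n) k, ¬ symPowAdj (pathAdj n) k i i) ∧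
    (∀ l : ℕ, 1 ≤ l →
      {i : Sym (Fin n) (2 * l) | symPowAdj (pathAdj n) (2 * l) i i}.ncard
        = Nat.choose (n + l - 2) l) := by
  constructor
  · rintro k hk hodd i ⟨p, q, hp, hq, hadj⟩
    set f : Fin n → ZMod 2 := fun a => (a.val : ZMod 2) with hf
    have hsum : ∀ (r : Fin k → Fin n), (↑(List.ofFn r) : Multiset (Fin n)) = ↑i →
        ∑ ℓ : Fin k, f (r ℓ) = ((↑i : Multiset (Fin n)).map f).sum := by
      intro r hr
      rw [← hr, Multiset.map_coe, List.map_ofFn, Multiset.sum_coe, List.sum_ofFn]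
      rfl
    have h1 := hsum p hp
    have h2 := hsum q hq
    have h3 : ∀ ℓ : Fin k, f (q ℓ) = f (p ℓ) + 1 := by
      intro ℓ
      rcases hadj ℓ with h | h
      · rw [hf]
        show ((q ℓ).val : ZMod 2) = ((p ℓ).val : ZMod 2) + 1
        rw [← h]
        push_cast
        ring
      · rw [hf]
        show ((q ℓ).val : ZMod 2) = ((p ℓ).val : ZMod 2) + 1
        have hpv : ((p ℓ).val : ZMod 2) = ((q ℓ).val : ZMod 2) + 1 := by
          rw [← h]; push_cast; ring
        rw [hpv, add_assoc, show (1 + 1 : ZMod 2) = 0 from rfl, add_zero]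
    have h4 : ∑ ℓ : Fin k, f (q ℓ) = (∑ ℓ : Fin k, f (p ℓ)) + k := by
      rw [Finset.sum_congr rfl (fun ℓ _ => h3 ℓ), Finset.sum_add_distrib]
      simp
    rw [h1, h2] at h4
    have h5 : ((k : ℕ) : ZMod 2) = 0 := left_eq_add.mp h4
    have h6 : (2 : ℕ) ∣ k := by
      exact_mod_cast (ZMod.natCast_eq_zero_iff k 2).1 h5
    rw [Nat.odd_iff] at hodd
    omega
  · intro l hl
    set F : Sym (Fin (n - 1)) l → Sym (Fin n) (2 * l) := fun m =>
      ⟨symF n m.1, by rw [symF_card, m.2]⟩ with hF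
    have hFinj : Function.Injective F := by
      intro m m' h
      have := congrArg Subtype.val h
      exact Subtype.ext (symF_inj n this)
    have hset : {i : Sym (Fin n) (2 * l) | symPowAdj (pathAdj n) (2 * l) i i}
        = Set.range F := by
      ext i
      constructor
      · intro h
        obtain ⟨m, hm, hFm⟩ := symF_of_loop n l i h
        exact ⟨⟨m, hm⟩, Subtype.ext hFm⟩
      · rintro ⟨m, rfl⟩
        exact loop_of_symF n l m.1 m.2 _ rfl
    rw [hset, ← Nat.card_coe_set_eq, Nat.card_range_of_injective hFinj,
      Nat.card_eq_fintype_card, Sym.card_sym_eq_multichoose, Nat.multichoose_eq]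
    rw [Fintype.card_fin]
    congr 1
    omega
end

section
/- Let n ≥ 3, k ≥ 1, and let C_n be the cycle graph with vertex set ℤ/nℤ in which i and j are adjacent if and only if i − j ≡ ±1 (mod n). (a) If n is even, then C_n^{⊙k} has exactly ⌈(k+1)/2⌉ connected components. (b) If n is odd, then C_n^{⊙k} is connected. -/
/-- Adjacency of the cycle graph `C_n` on vertex set `ℤ/nℤ`: `i ~ j` iff `i − j ≡ ±1`. -/
def cycleAdj (n : ℕ) (a b : ZMod n) : Prop := a - b = 1 ∨ b - a = 1

namespace SymPowCycleAux

variable {n k : ℕ}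

/-- tuple to symmetric power vertex -/
def toSym (p : Fin k → ZMod n) : Sym (ZMod n) k :=
  ⟨(List.ofFn p : Multiset (ZMod n)), by simp⟩

abbrev G (n k : ℕ) : SimpleGraph (Sym (ZMod n) k) :=
  SimpleGraph.fromRel (symPowAdj (cycleAdj n) k)

lemma coe_toSym (p : Fin k → ZMod n) :
    (↑(toSym p) : Multiset (ZMod n)) = ↑(List.ofFn p) := rfl

lemma step (p q : Fin k → ZMod n) (h : ∀ ℓ, cycleAdj n (p ℓ) (q ℓ)) :
    (G n k).Reachable (toSym p) (toSym q) := by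
  by_cases heq : toSym p = toSym q
  · rw [heq]
  · exact SimpleGraph.Adj.reachable ⟨heq, Or.inl ⟨p, q, rfl, rfl, h⟩⟩

lemma shift_aux : ∀ (N : ℕ) (p : Fin k → ZMod n) (t : Fin k → ℕ),
    (∑ ℓ, t ℓ) = N →
    (G n k).Reachable (toSym p) (toSym fun ℓ => p ℓ + 2 * (t ℓ : ZMod n)) := by
  intro N
  induction N using Nat.strong_induction_on with
  | _ N ih =>
    intro p t hN
    rcases Nat.eq_zero_or_pos N with h0 | hpos
    · subst h0
      have ht : ∀ ℓ, t ℓ = 0 := by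
        intro ℓ
        have := Finset.sum_eq_zero_iff.mp hN
        exact this ℓ (Finset.mem_univ ℓ)
      have : (fun ℓ => p ℓ + 2 * (t ℓ : ZMod n)) = p := by
        funext ℓ; simp [ht ℓ]
      rw [this]
    · obtain ⟨ℓ₀, hℓ₀⟩ : ∃ ℓ₀, t ℓ₀ ≠ 0 := by
        by_contra hc
        push_neg at hc
        simp [hc] at hN
        omega
      set p' : Fin k → ZMod n := fun m => if m = ℓ₀ then p m + 2 else p m with hp'
      set t' : Fin k → ℕ := fun m => if m = ℓ₀ then t m - 1 else t m with ht'
      have step1 : (G n k).Reachable (toSym p) (toSym fun m => p m + 1) := by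
        apply step; intro m; right; ring
      have step2 : (G n k).Reachable (toSym fun m => p m + 1) (toSym p') := by
        apply step; intro m
        by_cases hm : m = ℓ₀
        · right; simp [hp', hm]; ring
        · left; simp [hp', hm]
      have hsplit : (Finset.univ.erase ℓ₀).sum t + t ℓ₀ = N := by
        rw [Finset.sum_erase_add _ _ (Finset.mem_univ ℓ₀)]; exact hN
      have hsum : (∑ ℓ, t' ℓ) = N - 1 := by
        rw [← Finset.sum_erase_add _ t' (Finset.mem_univ ℓ₀)]
        have h1 : ∀ m ∈ Finset.univ.erase ℓ₀, t' m = t m := fun m hm => by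
          simp [ht', Finset.ne_of_mem_erase hm]
        rw [show (∑ m ∈ Finset.univ.erase ℓ₀, t m) = (Finset.univ.erase ℓ₀).sum t from rfl] at *
        rw [Finset.sum_congr rfl h1]
        have h2 : t' ℓ₀ = t ℓ₀ - 1 := by simp [ht']
        rw [h2]
        rw [show (∑ m ∈ Finset.univ.erase ℓ₀, t m) = (Finset.univ.erase ℓ₀).sum t from rfl]
        have := Nat.one_le_iff_ne_zero.mpr hℓ₀
        omega
      have hrec := ih (N - 1) (by omega) p' t' hsum
      have hfin : (fun m => p' m + 2 * (t' m : ZMod n))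
          = fun m => p m + 2 * (t m : ZMod n) := by
        funext m
        by_cases hm : m = ℓ₀
        · subst hm
          simp only [hp', ht', if_pos rfl]
          have : ((t m - 1 : ℕ) : ZMod n) = (t m : ZMod n) - 1 := by
            have : 1 ≤ t m := Nat.one_le_iff_ne_zero.mpr hℓ₀
            push_cast [this]; ring
          rw [this]; ring
        · simp only [hp', ht', if_neg hm]
      rw [hfin] at hrec
      exact (step1.trans step2).trans hrec

lemma countP_toSym (P : ZMod n → Prop) [DecidablePred P] (p : Fin k → ZMod n) :
    Multiset.countP P ↑(toSym p) = (Finset.univ.filter fun ℓ => P (p ℓ)).card := by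
  show Multiset.countP P ↑(List.ofFn p) = _
  rw [← Fin.univ_val_map, Multiset.countP_map]
  rfl

lemma exists_rep_sorted (P : ZMod n → Prop) [DecidablePred P] (i : Sym (ZMod n) k) :
    ∃ p : Fin k → ZMod n, toSym p = i ∧
      ∀ ℓ : Fin k, P (p ℓ) ↔ (ℓ : ℕ) < Multiset.countP P ↑i := by
  classical
  set A := (Multiset.filter P (↑i : Multiset (ZMod n))).toList with hA
  set B := (Multiset.filter (fun a => ¬ P a) (↑i : Multiset (ZMod n))).toList with hB
  have hcard : Multiset.card (↑i : Multiset (ZMod n)) = k := i.2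
  have hAlen : A.length = Multiset.countP P ↑i := by
    rw [hA, Multiset.length_toList, Multiset.countP_eq_card_filter]
  have hsum : A.length + B.length = k := by
    rw [hA, hB, Multiset.length_toList, Multiset.length_toList, ← Multiset.card_add,
      Multiset.filter_add_not, hcard]
  have hlen : (A ++ B).length = k := by rw [List.length_append, hsum]
  have hcountk : Multiset.countP P (↑i : Multiset (ZMod n)) ≤ k := by
    have := Multiset.countP_le_card P (↑i : Multiset (ZMod n)); omega
  refine ⟨fun ℓ => (A ++ B)[(ℓ : ℕ)]'(by rw [hlen]; exact ℓ.isLt), ?_, ?_⟩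
  · have hofn : List.ofFn (fun ℓ : Fin k => (A ++ B)[(ℓ : ℕ)]'(by rw [hlen]; exact ℓ.isLt))
        = A ++ B := by
      apply List.ext_getElem (by simp [hlen])
      intro m h1 h2
      simp
    apply Subtype.ext
    calc (toSym fun ℓ : Fin k => (A ++ B)[(ℓ : ℕ)]'(by rw [hlen]; exact ℓ.isLt)).1
        = ((List.ofFn fun ℓ : Fin k => (A ++ B)[(ℓ : ℕ)]'(by rw [hlen]; exact ℓ.isLt) :
            List (ZMod n)) : Multiset (ZMod n)) := rfl
      _ = ((A ++ B : List (ZMod n)) : Multiset (ZMod n)) := by rw [hofn]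
      _ = (↑A + ↑B : Multiset (ZMod n)) := (Multiset.coe_add A B).symm
      _ = (↑i : Multiset (ZMod n)) := by
          rw [hA, hB, Multiset.coe_toList, Multiset.coe_toList, Multiset.filter_add_not]
  · intro ℓ
    by_cases hlt : (ℓ : ℕ) < Multiset.countP P ↑i
    · have hlt' : (ℓ : ℕ) < A.length := by rw [hAlen]; exact hlt
      have hmem : (A ++ B)[(ℓ : ℕ)]'(by rw [hlen]; exact ℓ.isLt) ∈ A := by
        rw [List.getElem_append_left hlt']
        exact List.getElem_mem _
      have : (A ++ B)[(ℓ : ℕ)]'(by rw [hlen]; exact ℓ.isLt) ∈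
          Multiset.filter P (↑i : Multiset (ZMod n)) := by
        rwa [← Multiset.mem_toList]
      simp only [Multiset.mem_filter] at this
      simp [hlt, this.2]
    · have hge : A.length ≤ (ℓ : ℕ) := by rw [hAlen]; omega
      have hmem : (A ++ B)[(ℓ : ℕ)]'(by rw [hlen]; exact ℓ.isLt) ∈ B := by
        rw [List.getElem_append_right hge]
        exact List.getElem_mem _
      have : (A ++ B)[(ℓ : ℕ)]'(by rw [hlen]; exact ℓ.isLt) ∈
          Multiset.filter (fun a => ¬ P a) (↑i : Multiset (ZMod n)) := by
        rwa [← Multiset.mem_toList]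
      simp only [Multiset.mem_filter] at this
      simp [hlt, this.2]


end SymPowCycleAux


namespace SymPowCycleAux

variable {n k : ℕ}

/-- reachability from a pointwise even-difference condition -/
lemma reach_of_even_diff (p q : Fin k → ZMod n)
    (h : ∀ ℓ, ∃ t : ℕ, q ℓ = p ℓ + 2 * (t : ZMod n)) :
    (G n k).Reachable (toSym p) (toSym q) := by
  choose t ht using h
  have := shift_aux (∑ ℓ, t ℓ) p t rfl
  have hq : (fun ℓ => p ℓ + 2 * (t ℓ : ZMod n)) = q := by
    funext ℓ; rw [ht ℓ]
  rwa [hq] at this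

/-- odd case: everything reachable -/
lemma reach_odd (hn : 3 ≤ n) (hodd : Odd n) (i j : Sym (ZMod n) k) :
    (G n k).Reachable i j := by
  haveI : NeZero n := ⟨by omega⟩
  classical
  obtain ⟨p, hp, -⟩ := exists_rep_sorted (fun _ => True) i
  obtain ⟨q, hq, -⟩ := exists_rep_sorted (fun _ => True) j
  subst hp hq
  have hu : IsUnit (2 : ZMod n) := by
    have := (ZMod.isUnit_iff_coprime 2 n).mpr (Nat.coprime_two_left.mpr hodd)
    simpa using this
  apply reach_of_even_diff
  intro ℓ
  refine ⟨((q ℓ - p ℓ) * (2 : ZMod n)⁻¹).val, ?_⟩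
  rw [ZMod.natCast_rightInverse ((q ℓ - p ℓ) * (2 : ZMod n)⁻¹)]
  rw [mul_comm ((q ℓ - p ℓ)) ((2 : ZMod n)⁻¹), ← mul_assoc,
    ZMod.mul_inv_of_unit 2 hu, one_mul]
  ring

section Even

variable (h2 : 2 ∣ n)

/-- parity map -/
noncomputable def pa (h2 : 2 ∣ n) : ZMod n →+* ZMod 2 := ZMod.castHom h2 (ZMod 2)

/-- number of odd entries -/
noncomputable def mOdd (h2 : 2 ∣ n) (i : Sym (ZMod n) k) : ℕ :=
  Multiset.countP (fun a => pa h2 a = 1) ↑i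

lemma mOdd_le (i : Sym (ZMod n) k) : mOdd h2 i ≤ k := by
  classical
  have := Multiset.countP_le_card (fun a => pa h2 a = 1) (↑i : Multiset (ZMod n))
  have hc : Multiset.card (↑i : Multiset (ZMod n)) = k := i.2
  exact this.trans (le_of_eq hc)

lemma zmod2_cases (y : ZMod 2) : y = 0 ∨ y = 1 := by revert y; decide

lemma mOdd_toSym (p : Fin k → ZMod n) :
    mOdd h2 (toSym p) = (Finset.univ.filter fun ℓ => pa h2 (p ℓ) = 1).card := by
  classical
  exact countP_toSym _ p

lemma card_filter_compl (Q : Fin k → Prop) [DecidablePred Q] :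
    (Finset.univ.filter fun ℓ => ¬ Q ℓ).card = k - (Finset.univ.filter Q).card := by
  have := Finset.card_filter_add_card_filter_not (s := Finset.univ) (p := Q)
  simp only [Finset.card_univ, Fintype.card_fin] at this
  omega

lemma mOdd_flip_tuple (p q : Fin k → ZMod n) (h : ∀ ℓ, cycleAdj n (p ℓ) (q ℓ)) :
    mOdd h2 (toSym q) = k - mOdd h2 (toSym p) := by
  classical
  have key : ∀ y z : ZMod 2, (y - z = 1 ∨ z - y = 1) → z = y + 1 := by decide
  have hpar : ∀ ℓ, pa h2 (q ℓ) = pa h2 (p ℓ) + 1 := by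
    intro ℓ
    apply key
    rcases h ℓ with hc | hc
    · left; rw [← map_sub, hc, map_one]
    · right; rw [← map_sub, hc, map_one]
  rw [mOdd_toSym, mOdd_toSym]
  have : (Finset.univ.filter fun ℓ => pa h2 (q ℓ) = 1)
      = Finset.univ.filter fun ℓ => ¬ (pa h2 (p ℓ) = 1) := by
    apply Finset.filter_congr
    intro ℓ _
    rw [hpar ℓ]
    have key2 : ∀ y : ZMod 2, (y + 1 = 1 ↔ ¬ y = 1) := by decide
    exact key2 _
  rw [this, card_filter_compl]

lemma even_diff {d : ZMod n} (hn : 3 ≤ n) (hd : pa h2 d = 0) :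
    ∃ t : ℕ, d = 2 * (t : ZMod n) := by
  haveI : NeZero n := ⟨by omega⟩
  refine ⟨d.val / 2, ?_⟩
  have hdval : ((d.val : ℕ) : ZMod n) = d := ZMod.natCast_rightInverse d
  have : pa h2 ((d.val : ℕ) : ZMod n) = ((d.val : ℕ) : ZMod 2) := map_natCast _ _
  rw [hdval, hd] at this
  have hdvd : 2 ∣ d.val := (ZMod.natCast_eq_zero_iff _ 2).mp this.symm
  rw [← Nat.cast_ofNat, ← Nat.cast_mul, Nat.mul_div_cancel' hdvd, hdval]

lemma reach_of_mOdd_eq (hn : 3 ≤ n) (i j : Sym (ZMod n) k)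
    (hm : mOdd h2 i = mOdd h2 j) : (G n k).Reachable i j := by
  classical
  obtain ⟨p, hp, hps⟩ := exists_rep_sorted (fun a => pa h2 a = 1) i
  obtain ⟨q, hq, hqs⟩ := exists_rep_sorted (fun a => pa h2 a = 1) j
  subst hp hq
  apply reach_of_even_diff
  intro ℓ
  have hmi : Multiset.countP (fun a => pa h2 a = 1) (↑(toSym p) : Multiset (ZMod n))
      = mOdd h2 (toSym p) := rfl
  have hmj : Multiset.countP (fun a => pa h2 a = 1) (↑(toSym q) : Multiset (ZMod n))
      = mOdd h2 (toSym q) := rfl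
  have hiff : (pa h2 (p ℓ) = 1) ↔ (pa h2 (q ℓ) = 1) := by
    rw [hps ℓ, hqs ℓ, hmi, hmj, hm]
  have key : ∀ y z : ZMod 2, ((y = 1) ↔ (z = 1)) → z = y := by decide
  have hpq : pa h2 (q ℓ) = pa h2 (p ℓ) := key _ _ hiff
  have hd : pa h2 (q ℓ - p ℓ) = 0 := by
    rw [map_sub, hpq]; ring
  obtain ⟨t, ht⟩ := even_diff h2 hn hd
  exact ⟨t, by rw [← ht]; ring⟩

lemma exists_flip (i : Sym (ZMod n) k) :
    ∃ j, (G n k).Reachable i j ∧ mOdd h2 j = k - mOdd h2 i := by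
  classical
  obtain ⟨p, hp, -⟩ := exists_rep_sorted (fun _ => True) i
  subst hp
  refine ⟨toSym (fun ℓ => p ℓ + 1), ?_, ?_⟩
  · apply step
    intro ℓ
    right; ring
  · apply mOdd_flip_tuple
    intro ℓ
    right; ring

lemma mOdd_adj (i j : Sym (ZMod n) k) (h : symPowAdj (cycleAdj n) k i j) :
    mOdd h2 j = k - mOdd h2 i := by
  obtain ⟨p, q, hp, hq, hadj⟩ := h
  have hp' : toSym p = i := Subtype.ext hp
  have hq' : toSym q = j := Subtype.ext hq
  rw [← hp', ← hq']
  exact mOdd_flip_tuple h2 p q hadj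

/-- the component invariant -/
noncomputable def phi (h2 : 2 ∣ n) (i : Sym (ZMod n) k) : ℕ :=
  min (mOdd h2 i) (k - mOdd h2 i)

lemma phi_adj {i j : Sym (ZMod n) k} (h : (G n k).Adj i j) : phi h2 i = phi h2 j := by
  rcases h.2 with h' | h'
  · have := mOdd_adj h2 i j h'
    have h1 := mOdd_le h2 i
    have h2' := mOdd_le h2 j
    unfold phi; omega
  · have := mOdd_adj h2 j i h'
    have h1 := mOdd_le h2 i
    have h2' := mOdd_le h2 j
    unfold phi; omega

lemma phi_reachable {i j : Sym (ZMod n) k} (h : (G n k).Reachable i j) :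
    phi h2 i = phi h2 j := by
  obtain ⟨w⟩ := h
  induction w with
  | nil => rfl
  | cons hadj _ ih => exact (phi_adj h2 hadj).trans ih

lemma reach_of_phi_eq (hn : 3 ≤ n) (i j : Sym (ZMod n) k)
    (hm : phi h2 i = phi h2 j) : (G n k).Reachable i j := by
  have h1 := mOdd_le h2 i
  have h2' := mOdd_le h2 j
  by_cases hc : mOdd h2 i = mOdd h2 j
  · exact reach_of_mOdd_eq h2 hn i j hc
  · have hkm : mOdd h2 j = k - mOdd h2 i := by unfold phi at hm; omega
    obtain ⟨i', hreach, hmi'⟩ := exists_flip h2 i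
    exact hreach.trans (reach_of_mOdd_eq h2 hn i' j (by omega))

end Even

end SymPowCycleAux

open SymPowCycleAux in
/-- for the cycle graph `C_n` (`n ≥ 3`) and `k ≥ 1`: (a) if `n` is even then
`C_n^{⊙k}` has exactly `⌈(k+1)/2⌉ = (k+2)/2` connected components; (b) if `n` is odd then
`C_n^{⊙k}` is connected. -/
theorem symPow_cycle_components (n k : ℕ) (hn : 3 ≤ n) (hk : 1 ≤ k) :
    (Even n →
      Nat.card (SimpleGraph.fromRel (symPowAdj (cycleAdj n) k)).ConnectedComponent
        = (k + 2) / 2) ∧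
    (Odd n → (SimpleGraph.fromRel (symPowAdj (cycleAdj n) k)).Connected) := by
  constructor
  · intro heven
    have h2 : 2 ∣ n := heven.two_dvd
    have hbound : ∀ i : Sym (ZMod n) k, phi h2 i < (k+2)/2 := fun i => by
      have := mOdd_le h2 i; unfold phi; omega
    set f : (G n k).ConnectedComponent → Fin ((k+2)/2) :=
      SimpleGraph.ConnectedComponent.lift (fun i => ⟨phi h2 i, hbound i⟩)
        (fun v w p _ => Fin.ext (phi_reachable h2 p.reachable)) with hf
    have hinj : Function.Injective f := by
      intro c d
      refine SimpleGraph.ConnectedComponent.ind₂ (fun a b hab => ?_) c d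
      apply SimpleGraph.ConnectedComponent.sound
      apply reach_of_phi_eq h2 hn
      have : (⟨phi h2 a, hbound a⟩ : Fin ((k+2)/2)) = ⟨phi h2 b, hbound b⟩ := hab
      exact congrArg Fin.val this
    have hsurj : Function.Surjective f := by
      intro t
      have htk : (t : ℕ) < (k+2)/2 := t.isLt
      have htk2 : (t : ℕ) < k := by omega
      set v : Sym (ZMod n) k :=
        toSym (fun ℓ => if (ℓ : ℕ) < (t : ℕ) then (1 : ZMod n) else 0) with hv
      have hmv : mOdd h2 v = (t : ℕ) := by
        rw [hv, mOdd_toSym]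
        have hfe : (Finset.univ.filter fun ℓ : Fin k =>
            pa h2 (if (ℓ : ℕ) < (t : ℕ) then (1 : ZMod n) else 0) = 1)
            = Finset.univ.filter (fun ℓ : Fin k => (ℓ : ℕ) < (t : ℕ)) := by
          apply Finset.filter_congr
          intro ℓ _
          split_ifs with hc
          · simp [hc, map_one]
          · simp [hc, map_zero]
        rw [hfe]
        have : Finset.univ.filter (fun ℓ : Fin k => (ℓ : ℕ) < (t : ℕ))
            = Finset.Iio (⟨(t : ℕ), htk2⟩ : Fin k) := by
          ext ℓ
          simp [Finset.mem_Iio, Fin.lt_def]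
        rw [this, Fin.card_Iio]
      refine ⟨(G n k).connectedComponentMk v, ?_⟩
      rw [hf, SimpleGraph.ConnectedComponent.lift_mk]
      apply Fin.ext
      show phi h2 v = (t : ℕ)
      unfold phi
      rw [hmv]
      omega
    calc Nat.card (G n k).ConnectedComponent
        = Nat.card (Fin ((k+2)/2)) := Nat.card_congr (Equiv.ofBijective f ⟨hinj, hsurj⟩)
      _ = (k+2)/2 := by simp
  · intro hodd
    haveI : Nonempty (Sym (ZMod n) k) := ⟨toSym (fun _ => (0 : ZMod n))⟩
    exact ⟨fun i j => reach_odd hn hodd i j⟩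
end

section
/- Let n, m ≥ 1 and k ≥ 1, and let K_{n,m} be the complete bipartite graph whose vertex set is the disjoint union of a left part of size n and a right part of size m, with every left vertex adjacent to every right vertex and no other edges. For a multiset x of size k over the vertices, let L(x) denote the number of elements of x (counted with multiplicity) lying in the left part. Then two vertices i and j of K_{n,m}^{⊙k} lie in the same connected component if and only if min(L(i), k−L(i)) = min(L(j), k−L(j)). Consequently, K_{n,m}^{⊙k} has exactly ⌈(k+1)/2⌉ connected components. -/
/-- Adjacency of the complete bipartite graph `K_{n,m}`: every left vertex is adjacent to
every right vertex, and there are no other edges. -/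
def bipAdj (n m : ℕ) (x y : Fin n ⊕ Fin m) : Prop :=
  (x.isLeft = true ∧ y.isRight = true) ∨ (x.isRight = true ∧ y.isLeft = true)

/-- The number of elements of the multiset `i` (with multiplicity) lying in the left part. -/
def leftCount {n m k : ℕ} (i : Sym (Fin n ⊕ Fin m) k) : ℕ :=
  Multiset.countP (fun v : Fin n ⊕ Fin m => v.isLeft = true) (i : Multiset (Fin n ⊕ Fin m))

-- Rel to lists
lemma rel_exists_lists {V W : Type*} {R : V → W → Prop} {s : Multiset V} {t : Multiset W}
    (h : Multiset.Rel R s t) :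
    ∃ (l₁ : List V) (l₂ : List W), (↑l₁ : Multiset V) = s ∧ (↑l₂ : Multiset W) = t ∧
      List.Forall₂ R l₁ l₂ := by
  induction h with
  | zero => exact ⟨[], [], rfl, rfl, List.Forall₂.nil⟩
  | cons hab _ ih =>
      obtain ⟨l₁, l₂, h1, h2, hf⟩ := ih
      exact ⟨_ :: l₁, _ :: l₂, by rw [← h1, ← Multiset.cons_coe], by rw [← h2, ← Multiset.cons_coe], List.Forall₂.cons hab hf⟩

-- countP of ofFn
lemma countP_ofFn {V : Type*} {k : ℕ} (p : Fin k → V) (pr : V → Prop) [DecidablePred pr] :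
    Multiset.countP pr ↑(List.ofFn p) = (Finset.univ.filter fun ℓ => pr (p ℓ)).card := by
  have : (↑(List.ofFn p) : Multiset V) = Multiset.map p Finset.univ.val := by
    simp [List.ofFn_eq_map, ← Multiset.map_coe]
  rw [this, Multiset.countP_map]
  rfl

lemma symPowAdj_bip_iff {n m k : ℕ} (i j : Sym (Fin n ⊕ Fin m) k) :
    symPowAdj (bipAdj n m) k i j ↔ leftCount i + leftCount j = k := by
  constructor
  · rintro ⟨p, q, hp, hq, h⟩
    have hpc : leftCount i = (Finset.univ.filter fun ℓ => (p ℓ).isLeft = true).card := by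
      rw [leftCount, ← hp, countP_ofFn]
    have hqc : leftCount j = (Finset.univ.filter fun ℓ => (q ℓ).isLeft = true).card := by
      rw [leftCount, ← hq, countP_ofFn]
    have key : ∀ ℓ : Fin k, ((q ℓ).isLeft = true) ↔ ¬ ((p ℓ).isLeft = true) := by
      intro ℓ
      have := h ℓ
      cases hpℓ : p ℓ <;> cases hqℓ : q ℓ <;> simp_all [bipAdj]
    rw [hpc, hqc]
    rw [Finset.filter_congr (fun ℓ _ => by rw [key ℓ] : ∀ ℓ ∈ Finset.univ,
      ((q ℓ).isLeft = true) ↔ ¬ ((p ℓ).isLeft = true))]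
    rw [Finset.card_filter_add_card_filter_not]
    simp
  · intro hsum
    have hi : Multiset.card (i : Multiset (Fin n ⊕ Fin m)) = k := i.2
    have hj : Multiset.card (j : Multiset (Fin n ⊕ Fin m)) = k := j.2
    set P : (Fin n ⊕ Fin m) → Prop := fun v => v.isLeft = true with hP
    have hcard : ∀ s : Multiset (Fin n ⊕ Fin m),
        Multiset.card (Multiset.filter P s) = Multiset.countP P s :=
      fun s => (Multiset.countP_eq_card_filter _ _).symm
    have hcard' : ∀ s : Multiset (Fin n ⊕ Fin m),
        Multiset.card (Multiset.filter (fun v => ¬ P v) s)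
          = Multiset.card s - Multiset.countP P s := by
      intro s
      have := congrArg Multiset.card (Multiset.filter_add_not P s)
      rw [Multiset.card_add, hcard] at this
      omega
    have hrel : Multiset.Rel (bipAdj n m) ↑i ↑j := by
      have hi' : (↑i : Multiset (Fin n ⊕ Fin m))
          = Multiset.filter P ↑i + Multiset.filter (fun v => ¬ P v) ↑i :=
        (Multiset.filter_add_not _ _).symm
      have hj' : (↑j : Multiset (Fin n ⊕ Fin m))
          = Multiset.filter (fun v => ¬ P v) ↑j + Multiset.filter P ↑j := by
        rw [add_comm]; exact (Multiset.filter_add_not _ _).symm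
      rw [hi', hj']
      have h1 : leftCount i = Multiset.countP P (↑i : Multiset (Fin n ⊕ Fin m)) := rfl
      have h2 : leftCount j = Multiset.countP P (↑j : Multiset (Fin n ⊕ Fin m)) := rfl
      have h3 : Multiset.countP P (↑j : Multiset (Fin n ⊕ Fin m)) ≤ k := by
        have := Multiset.countP_le_card P (↑j : Multiset (Fin n ⊕ Fin m)); rwa [hj] at this
      have h3' : Multiset.countP P (↑i : Multiset (Fin n ⊕ Fin m)) ≤ k := by
        have := Multiset.countP_le_card P (↑i : Multiset (Fin n ⊕ Fin m)); rwa [hi] at this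
      apply Multiset.Rel.add
      · apply Multiset.rel_of_forall
        · intro a b ha hb
          have ha' := Multiset.of_mem_filter ha
          have hb' := Multiset.of_mem_filter hb
          refine Or.inl ⟨ha', ?_⟩
          cases b with
          | inl v => exact absurd rfl hb'
          | inr v => rfl
        · rw [hcard, hcard', hj, ← h1, ← h2]
          omega
      · apply Multiset.rel_of_forall
        · intro a b ha hb
          have ha' := Multiset.of_mem_filter ha
          have hb' := Multiset.of_mem_filter hb
          refine Or.inr ⟨?_, hb'⟩
          cases a with
          | inl v => exact absurd rfl ha'
          | inr v => rfl
        · rw [hcard, hcard', hi, ← h1, ← h2]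
          omega
    obtain ⟨l₁, l₂, h1, h2, hf⟩ := rel_exists_lists hrel
    have hl1 : l₁.length = k := by
      have := congrArg Multiset.card h1
      simpa [hi] using this
    have hl2 : l₂.length = k := by
      have := congrArg Multiset.card h2
      simpa [hj] using this
    refine ⟨fun ℓ => l₁.get (Fin.cast hl1.symm ℓ), fun ℓ => l₂.get (Fin.cast hl2.symm ℓ),
      ?_, ?_, ?_⟩
    · rw [← h1]
      congr 1
      apply List.ext_getElem (by simp [hl1])
      intro x hx1 hx2
      simp [List.getElem_ofFn]
    · rw [← h2]
      congr 1
      apply List.ext_getElem (by simp [hl2])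
      intro x hx1 hx2
      simp [List.getElem_ofFn]
    · intro ℓ
      exact (List.forall₂_iff_get.mp hf).2 ℓ (by omega) (by omega)

lemma leftCount_le {n m k : ℕ} (i : Sym (Fin n ⊕ Fin m) k) : leftCount i ≤ k := by
  have := Multiset.countP_le_card (fun v : Fin n ⊕ Fin m => v.isLeft = true)
    (↑i : Multiset (Fin n ⊕ Fin m))
  have h2 : Multiset.card (↑i : Multiset (Fin n ⊕ Fin m)) = k := i.2
  show Multiset.countP (fun v : Fin n ⊕ Fin m => v.isLeft = true)
    (↑i : Multiset (Fin n ⊕ Fin m)) ≤ k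
  omega

def bipVert {n m : ℕ} (hn : 1 ≤ n) (hm : 1 ≤ m) (k t : ℕ) (ht : t ≤ k) :
    Sym (Fin n ⊕ Fin m) k :=
  ⟨Multiset.replicate t (Sum.inl ⟨0, hn⟩) + Multiset.replicate (k - t) (Sum.inr ⟨0, hm⟩), by
    simp [Multiset.card_replicate]
    omega⟩

lemma leftCount_bipVert {n m : ℕ} (hn : 1 ≤ n) (hm : 1 ≤ m) (k t : ℕ) (ht : t ≤ k) :
    leftCount (bipVert hn hm k t ht) = t := by
  show Multiset.countP _ (Multiset.replicate t _ + Multiset.replicate (k - t) _) = t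
  rw [Multiset.countP_add]
  have h1 : Multiset.countP (fun v : Fin n ⊕ Fin m => v.isLeft = true)
      (Multiset.replicate t (Sum.inl ⟨0, hn⟩)) = t := by
    rw [Multiset.countP_eq_card.mpr, Multiset.card_replicate]
    intro a ha
    rw [Multiset.eq_of_mem_replicate ha]
    rfl
  have h2 : Multiset.countP (fun v : Fin n ⊕ Fin m => v.isLeft = true)
      (Multiset.replicate (k - t) (Sum.inr ⟨0, hm⟩)) = 0 := by
    rw [Multiset.countP_eq_zero]
    intro a ha
    rw [Multiset.eq_of_mem_replicate ha]
    simp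
  omega

/-- two vertices `i, j` of `K_{n,m}^{⊙k}` lie in the same connected component
iff `min(L(i), k−L(i)) = min(L(j), k−L(j))`, where `L` counts left-part elements;
consequently `K_{n,m}^{⊙k}` has exactly `⌈(k+1)/2⌉ = (k+2)/2` connected components. -/
theorem symPow_completeBipartite_components (n m k : ℕ)
    (hn : 1 ≤ n) (hm : 1 ≤ m) (hk : 1 ≤ k) :
    (∀ i j : Sym (Fin n ⊕ Fin m) k,
      (SimpleGraph.fromRel (symPowAdj (bipAdj n m) k)).Reachable i j ↔
        min (leftCount i) (k - leftCount i) = min (leftCount j) (k - leftCount j)) ∧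
    Nat.card (SimpleGraph.fromRel (symPowAdj (bipAdj n m) k)).ConnectedComponent
      = (k + 2) / 2 := by
  set G := SimpleGraph.fromRel (symPowAdj (bipAdj n m) k) with hG
  have hadj : ∀ i j : Sym (Fin n ⊕ Fin m) k,
      G.Adj i j ↔ i ≠ j ∧ leftCount i + leftCount j = k := by
    intro i j
    rw [hG, SimpleGraph.fromRel_adj, symPowAdj_bip_iff, symPowAdj_bip_iff]
    constructor
    · rintro ⟨hne, h | h⟩ <;> exact ⟨hne, by omega⟩
    · rintro ⟨hne, h⟩; exact ⟨hne, Or.inl h⟩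
  have step : ∀ i j : Sym (Fin n ⊕ Fin m) k, G.Adj i j →
      min (leftCount i) (k - leftCount i) = min (leftCount j) (k - leftCount j) := by
    intro i j h
    obtain ⟨-, hsum⟩ := (hadj i j).mp h
    have hi := leftCount_le i
    have hj := leftCount_le j
    omega
  have key : ∀ i j : Sym (Fin n ⊕ Fin m) k, G.Reachable i j ↔
      min (leftCount i) (k - leftCount i) = min (leftCount j) (k - leftCount j) := by
    intro i j
    constructor
    · intro h
      obtain ⟨w⟩ := h
      induction w with
      | nil => rfl
      | cons h p ih => exact (step _ _ h).trans ih
    · intro hmin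
      have hi := leftCount_le i
      have hj := leftCount_le j
      by_cases hsum : leftCount i + leftCount j = k
      · by_cases hij : i = j
        · exact hij ▸ SimpleGraph.Reachable.refl i
        · exact ((hadj i j).mpr ⟨hij, hsum⟩).reachable
      · have hab : leftCount i = leftCount j := by omega
        have h2a : leftCount i + leftCount i ≠ k := by omega
        set w := bipVert hn hm k (k - leftCount i) (by omega) with hw
        have hwc : leftCount w = k - leftCount i := leftCount_bipVert hn hm k _ _
        have h1 : G.Adj i w := by
          refine (hadj i w).mpr ⟨?_, by rw [hwc]; omega⟩
          intro he
          have := congrArg leftCount he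
          rw [hwc] at this
          omega
        have h2 : G.Adj w j := by
          refine (hadj w j).mpr ⟨?_, by rw [hwc]; omega⟩
          intro he
          have := congrArg leftCount he
          rw [hwc] at this
          omega
        exact h1.reachable.trans h2.reachable
  refine ⟨key, ?_⟩
  have e : G.ConnectedComponent ≃ Fin (k / 2 + 1) := by
    refine Equiv.ofBijective (SimpleGraph.ConnectedComponent.lift
      (fun i => (⟨min (leftCount i) (k - leftCount i), by have := leftCount_le i; omega⟩ :
        Fin (k / 2 + 1)))
      (fun v w p _ => Fin.ext (by simpa using (key v w).mp p.reachable))) ⟨?_, ?_⟩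
    · intro c d
      refine SimpleGraph.ConnectedComponent.ind₂ (fun v w h => ?_) c d
      apply SimpleGraph.ConnectedComponent.sound
      rw [key]
      simpa using congrArg Fin.val h
    · intro t
      have ht : (t : ℕ) ≤ k := by have := t.isLt; omega
      refine ⟨G.connectedComponentMk (bipVert hn hm k t ht), ?_⟩
      apply Fin.ext
      rw [SimpleGraph.ConnectedComponent.lift_mk]
      simp only [leftCount_bipVert]
      have := t.isLt
      omega
  rw [Nat.card_congr e, Nat.card_eq_fintype_card, Fintype.card_fin]
  omega
end
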